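/- arXiv:0912.1068 — 8 statements merged into one kernel-verified Lean document; each statement's English description precedes it below -/
import Mathlib

section
/- Let d be a positive integer and let P ⊂ ℝ^d be a lattice d-simplex (the convex hull of d+1 affinely independent points of ℤ^d). If every edge of P has lattice length at least d(d+1), then P is covered by lattice parallelepipeds, i.e., every point of P lies in some lattice parallelepiped contained in P; in particular, P is integrally closed. -/
open Set Metric Pointwise

noncomputable section

/-- Points of the Euclidean space `ℝ^d`. -/
abbrev Pt (d : ℕ) : Type := EuclideanSpace ℝ (Fin d)

/-- `x` is a point of the standard lattice `ℤ^d ⊂ ℝ^d`. -/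
def IsLatticePt {d : ℕ} (x : Pt d) : Prop := ∀ i, ∃ n : ℤ, x i = (n : ℝ)

/-- `x` has rational coordinates. -/
def IsRatPt {d : ℕ} (x : Pt d) : Prop := ∀ i, ∃ q : ℚ, x i = (q : ℝ)

/-- `P` is a polytope with rational vertices. -/
def IsRationalPolytope {d : ℕ} (P : Set (Pt d)) : Prop :=
  ∃ V : Finset (Pt d), (∀ v ∈ V, IsRatPt v) ∧ P = convexHull ℝ (V : Set (Pt d))

/-- `P` is a polytope with integral vertices. -/
def IsLatticePolytope {d : ℕ} (P : Set (Pt d)) : Prop :=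
  ∃ V : Finset (Pt d), (∀ v ∈ V, IsLatticePt v) ∧ P = convexHull ℝ (V : Set (Pt d))

/-- The (affine) dimension of a set. -/
def polyDim {d : ℕ} (P : Set (Pt d)) : ℕ := Module.finrank ℝ (vectorSpan ℝ P)

/-- An integer vector is primitive if its components are coprime. -/
def IsPrimitive {d : ℕ} (u : Fin d → ℤ) : Prop := Finset.univ.gcd u = 1

/-- The segment `[v, w]` has lattice length at least `lb`: whenever `w - v = t • u` with
`u` a primitive integer vector and `t > 0`, one has `t ≥ lb`. -/
def LatLenGE {d : ℕ} (v w : Pt d) (lb : ℝ) : Prop :=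
  ∀ (u : Fin d → ℤ) (t : ℝ), 0 < t → IsPrimitive u →
    (∀ i, w i - v i = t * (u i : ℝ)) → lb ≤ t

/-- The segment `[v, w]` has lattice length greater than `lb`. -/
def LatLenGT {d : ℕ} (v w : Pt d) (lb : ℝ) : Prop :=
  ∀ (u : Fin d → ℤ) (t : ℝ), 0 < t → IsPrimitive u →
    (∀ i, w i - v i = t * (u i : ℝ)) → lb < t

/-- `[v, w]` is an edge (a one-dimensional face) of `P`. -/
def IsEdge {d : ℕ} (P : Set (Pt d)) (v w : Pt d) : Prop :=
  v ≠ w ∧ IsExtreme ℝ P (segment ℝ v w)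

/-- Every edge of `P` has lattice length at least `lb`. -/
def EdgeLengthsGE {d : ℕ} (P : Set (Pt d)) (lb : ℝ) : Prop :=
  ∀ v w, IsEdge P v w → LatLenGE v w lb

/-- Every edge of `P` has lattice length greater than `lb`. -/
def EdgeLengthsGT {d : ℕ} (P : Set (Pt d)) (lb : ℝ) : Prop :=
  ∀ v w, IsEdge P v w → LatLenGT v w lb

/-- The union `⋃ (x + P)` over all vertices `v` of `P` and all
`x ∈ (c-1)P ∩ ((c-1)v + ℤ^d)`. -/
def cnUnion {d : ℕ} (P : Set (Pt d)) (c : ℝ) : Set (Pt d) :=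
  {y | ∃ v ∈ Set.extremePoints ℝ P, ∃ x ∈ (c - 1) • P,
    IsLatticePt (x - (c - 1) • v) ∧ ∃ p ∈ P, y = x + p}

/-- `P` is `k`-convex-normal: `CN(d,k)`. -/
def ConvexNormal {d : ℕ} (k : ℚ) (P : Set (Pt d)) : Prop :=
  ∀ c : ℚ, 2 ≤ c → c ≤ k → (c : ℝ) • P = cnUnion P (c : ℝ)

/-- `P` is integrally closed. -/
def IntegrallyClosed {d : ℕ} (P : Set (Pt d)) : Prop :=
  ∀ c : ℕ, 0 < c → ∀ z ∈ (c : ℝ) • P, IsLatticePt z →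
    ∃ x : Fin c → Pt d, (∀ i, x i ∈ P ∧ IsLatticePt (x i)) ∧ ∑ i, x i = z

/-- A face of a polytope: a closed convex extreme subset. -/
def IsFaceOf {d : ℕ} (P F : Set (Pt d)) : Prop :=
  IsExtreme ℝ P F ∧ Convex ℝ F ∧ IsClosed F

/-- A facet: a face of codimension one. -/
def IsFacetOf {d : ℕ} (P F : Set (Pt d)) : Prop :=
  IsFaceOf P F ∧ polyDim F + 1 = polyDim P

/-- `width_F(P)`: the maximum over vertices `v` of `P` of `dist(v, aff F)`. -/
def facetWidth {d : ℕ} (P F : Set (Pt d)) : ℝ :=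
  sSup ((fun v => infDist v ((affineSpan ℝ F : AffineSubspace ℝ (Pt d)) : Set (Pt d))) ''
    Set.extremePoints ℝ P)

/-- `U_P(F, ε)`: the `ε`-layer of `P` along (the affine hull of) `F`. -/
def layer {d : ℕ} (P F : Set (Pt d)) (ε : ℝ) : Set (Pt d) :=
  {x ∈ P | infDist x ((affineSpan ℝ F : AffineSubspace ℝ (Pt d)) : Set (Pt d)) ≤ ε}

/-- `P` is `k`-boundary-convex-normal: `BCN(d,k)`. -/
def BCN {d : ℕ} (k : ℚ) (P : Set (Pt d)) : Prop :=
  ∀ F, IsFacetOf P F → ∀ c : ℚ, 2 ≤ c → c ≤ k →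
    layer ((c : ℝ) • P) ((c : ℝ) • F) (facetWidth P F / ((d : ℝ) + 1)) ⊆ cnUnion P (c : ℝ)

/-- The parallelepiped `z + {Σ λᵢ • wᵢ : 0 ≤ λᵢ ≤ 1}`. -/
def Parallelepiped {d m : ℕ} (z : Pt d) (w : Fin m → Pt d) : Set (Pt d) :=
  {x | ∃ lam : Fin m → ℝ, (∀ i, lam i ∈ Icc (0 : ℝ) 1) ∧ x = z + ∑ i, lam i • w i}

/-- `L` is a full-dimensional lattice parallelepiped. -/
def IsLatticeParallelepiped {d : ℕ} (L : Set (Pt d)) : Prop :=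
  ∃ (z : Pt d) (w : Fin d → Pt d), IsLatticePt z ∧ (∀ i, IsLatticePt (w i)) ∧
    LinearIndependent ℝ w ∧ L = Parallelepiped z w

/-! Let `p` lie in the simplex and let `i₀` be a vertex of largest barycentric coordinate, so
`w i₀ ≥ 1/(d+1)`. Each edge at `v i₀` is `G k • U k` with `U k` a lattice vector and
`G k ≥ d(d+1)`, so `p = v i₀ + ∑ μ k • U k`; rounding the `μ k` down gives a lattice
parallelepiped through `p`. Its points exceed the barycentric coordinates of `p` along the `d`
edges at `i₀` by at most `1/G k ≤ 1/(d(d+1))` each, in total at most `1/(d+1) ≤ w i₀`, so it stays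
inside the simplex.

Any set covered by lattice parallelepipeds is integrally closed: for a lattice point of
`c • L`, split each coordinate `c λₖ ∈ [0, c]` into `c - 1` numbers in `{0, 1}` and a remainder in
`[0, 1]`; the first `c - 1` summands are lattice points, hence so is the last. -/

def latticeSubgroup (d : ℕ) : AddSubgroup (Pt d) where
  carrier := {x | IsLatticePt x}
  add_mem' {x y} hx hy i := by
    obtain ⟨m, hm⟩ := hx i
    obtain ⟨n, hn⟩ := hy i
    exact ⟨m + n, by simp [hm, hn]⟩
  zero_mem' _ := ⟨0, by simp⟩
  neg_mem' {x} hx i := by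
    obtain ⟨m, hm⟩ := hx i
    exact ⟨-m, by simp [hm]⟩

lemma IsLatticePt.exists_eq_smul_primitive {d : ℕ} {a : Pt d} (ha : IsLatticePt a) (ha0 : a ≠ 0) :
    ∃ g : ℤ, 0 < g ∧ ∃ u : Fin d → ℤ, IsPrimitive u ∧ ∀ i, a i = g * u i := by
  choose n hn using ha
  obtain ⟨i₀, hi₀⟩ : ∃ i, n i ≠ 0 := by
    by_contra! h
    exact ha0 (by ext i; simp [hn, h])
  have hg : Finset.univ.gcd n ≠ 0 := fun h ↦ hi₀ (Finset.gcd_eq_zero_iff.mp h i₀ (by simp))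
  refine ⟨Finset.univ.gcd n, (Int.nonneg_of_normalize_eq_self Finset.normalize_gcd).lt_of_ne' hg,
    fun i ↦ n i / Finset.univ.gcd n, Finset.gcd_div_eq_one (Finset.mem_univ i₀) hi₀, fun i ↦ ?_⟩
  rw [hn, ← Int.cast_mul, Int.mul_ediv_cancel' (Finset.gcd_dvd (Finset.mem_univ i))]

lemma EdgeLengthsGE.exists_eq_smul {d : ℕ} {P : Set (Pt d)} {lb : ℝ} (hP : EdgeLengthsGE P lb)
    {x y : Pt d} (hxy : IsEdge P x y) (hx : IsLatticePt x) (hy : IsLatticePt y) :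
    ∃ G : ℝ, lb ≤ G ∧ ∃ U : Pt d, IsLatticePt U ∧ y - x = G • U := by
  have hyx : IsLatticePt (y - x) := (latticeSubgroup d).sub_mem hy hx
  obtain ⟨g, hg, u, hu, hyxu⟩ := hyx.exists_eq_smul_primitive (sub_ne_zero.mpr hxy.1.symm)
  refine ⟨g, hP x y hxy u g (by exact_mod_cast hg) hu hyxu, WithLp.toLp 2 (fun i ↦ (u i : ℝ)),
    fun i ↦ ⟨u i, rfl⟩, ?_⟩
  ext i
  simp [hyxu]

lemma isExtreme_setOf_forall_eq_zero {E κ : Type*} [AddCommGroup E] [Module ℝ E] {A : Set E}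
    (f : κ → E →ᵃ[ℝ] ℝ) (hf : ∀ k, ∀ x ∈ A, 0 ≤ f k x) :
    IsExtreme ℝ A {x ∈ A | ∀ k, f k x = 0} := by
  refine ⟨fun x hx ↦ hx.1, fun x hx y hy z hz ⟨a, b, ha, hb, hab, hxyz⟩ ↦ ?_⟩
  have hsum : ∀ k, a * f k x + b * f k y = 0 := fun k ↦ by
    rw [← hz.2 k, ← hxyz, Convex.combo_affine_apply hab, smul_eq_mul, smul_eq_mul]
  refine Set.mem_sep hx fun k ↦ ?_
  nlinarith [hsum k, mul_nonneg ha.le (hf k x hx), mul_nonneg hb.le (hf k y hy)]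

namespace AffineBasis

variable {ι E : Type*} [AddCommGroup E] [Module ℝ E] (b : AffineBasis ι ℝ E)

lemma coord_nonneg_of_mem_convexHull {x : E} (hx : x ∈ convexHull ℝ (range b)) (i : ι) :
    0 ≤ b.coord i x := by
  rw [b.convexHull_eq_nonneg_coord] at hx
  exact hx i

lemma segment_eq_setOf_coord_eq_zero [Fintype ι] {i j : ι} (hij : i ≠ j) :
    segment ℝ (b i) (b j) =
      {x ∈ convexHull ℝ (range b) | ∀ k : {k // k ≠ i ∧ k ≠ j}, b.coord k x = 0} := by
  ext x
  constructor
  · intro hx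
    refine ⟨segment_subset_convexHull (mem_range_self i) (mem_range_self j) hx, fun k ↦ ?_⟩
    obtain ⟨a, c, -, -, hac, rfl⟩ := hx
    rw [Convex.combo_affine_apply hac, b.coord_apply_ne k.2.1, b.coord_apply_ne k.2.2]
    simp
  · rintro ⟨hx, hx0⟩
    have hvanish (k : ι) (hk : k ≠ i ∧ k ≠ j) : b.coord k x = 0 := hx0 ⟨k, hk⟩
    refine ⟨b.coord i x, b.coord j x, b.coord_nonneg_of_mem_convexHull hx i,
      b.coord_nonneg_of_mem_convexHull hx j, ?_, ?_⟩
    · rw [← b.sum_coord_apply_eq_one x, Fintype.sum_eq_add i j hij hvanish]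
    · conv_rhs => rw [← b.linear_combination_coord_eq_self x]
      rw [Fintype.sum_eq_add i j hij fun k hk ↦ by simp [hvanish k hk]]

lemma isExtreme_segment [Fintype ι] {i j : ι} (hij : i ≠ j) :
    IsExtreme ℝ (convexHull ℝ (range b)) (segment ℝ (b i) (b j)) := by
  rw [b.segment_eq_setOf_coord_eq_zero hij]
  exact isExtreme_setOf_forall_eq_zero (fun k : {k // k ≠ i ∧ k ≠ j} ↦ b.coord k) fun k _ hx ↦
    b.coord_nonneg_of_mem_convexHull hx k

lemma linearIndependent_of_sub_eq_smul {n : ℕ} (b : AffineBasis (Fin (n + 1)) ℝ E)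
    (i₀ : Fin (n + 1)) {G : Fin n → ℝ} {U : Fin n → E} (hG : ∀ k, G k ≠ 0)
    (hGU : ∀ k, b (i₀.succAbove k) - b i₀ = G k • U k) : LinearIndependent ℝ U := by
  have hfam : (fun k ↦ Units.mk0 (G k) (hG k)) • U =
      b.basisOf i₀ ∘ fun k ↦ ⟨i₀.succAbove k, Fin.succAbove_ne i₀ k⟩ := by
    funext k
    simp [hGU]
  rw [← LinearIndependent.units_smul_iff U fun k ↦ Units.mk0 (G k) (hG k), hfam]
  exact (b.basisOf i₀).linearIndependent.comp _ fun k k' h ↦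
    Fin.succAbove_right_injective (congrArg Subtype.val h)

end AffineBasis

section SimplexCoordinates

variable {E : Type*} [AddCommGroup E] [Module ℝ E] {n : ℕ}

lemma sum_smul_eq_add_sum_smul_sub_succAbove (v : Fin (n + 1) → E) {w : Fin (n + 1) → ℝ}
    (hw : ∑ i, w i = 1) (i₀ : Fin (n + 1)) :
    ∑ i, w i • v i = v i₀ + ∑ k, w (i₀.succAbove k) • (v (i₀.succAbove k) - v i₀) := by
  have h : ∑ i, w i • v i = (∑ i, w i) • v i₀ + ∑ i, w i • (v i - v i₀) := by
    simp [smul_sub, Finset.sum_sub_distrib, Finset.sum_smul]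
  rw [h, hw, one_smul, Fin.sum_univ_succAbove _ i₀, sub_self, smul_zero, zero_add]

lemma add_sum_smul_sub_succAbove_mem_convexHull (v : Fin (n + 1) → E) (i₀ : Fin (n + 1))
    {t : Fin n → ℝ} (ht₀ : ∀ k, 0 ≤ t k) (ht₁ : ∑ k, t k ≤ 1) :
    v i₀ + ∑ k, t k • (v (i₀.succAbove k) - v i₀) ∈ convexHull ℝ (range v) := by
  set w : Fin (n + 1) → ℝ := Fin.insertNth i₀ (1 - ∑ k, t k) t
  have hw₀ : ∀ i, 0 ≤ w i := Fin.succAboveCases i₀ (by simpa [w]) (by simpa [w])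
  have hw₁ : ∑ i, w i = 1 := by simp [w, Fin.sum_insertNth]
  have h := (convex_convexHull ℝ (range v)).sum_mem (fun i _ ↦ hw₀ i) hw₁
    fun i _ ↦ subset_convexHull ℝ _ (mem_range_self i)
  rw [sum_smul_eq_add_sum_smul_sub_succAbove v hw₁ i₀] at h
  simpa [w] using h

end SimplexCoordinates

lemma sum_inv_le_inv_add_one {d : ℕ} {G : Fin d → ℝ} (hG : ∀ k, (d : ℝ) * (d + 1) ≤ G k) :
    ∑ k, (G k)⁻¹ ≤ ((d : ℝ) + 1)⁻¹ := by
  rcases Nat.eq_zero_or_pos d with rfl | hd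
  · simp
  have hd' : (0 : ℝ) < d := Nat.cast_pos.mpr hd
  calc ∑ k, (G k)⁻¹ ≤ ∑ _k : Fin d, ((d : ℝ) * (d + 1))⁻¹ :=
        Finset.sum_le_sum fun k _ ↦ inv_anti₀ (by positivity) (hG k)
    _ = ((d : ℝ) + 1)⁻¹ := by
        simp only [Finset.sum_const, Finset.card_univ, Fintype.card_fin, nsmul_eq_mul]
        field_simp

lemma add_sum_smul_mem_parallelepiped_floor {d m : ℕ} (z : Pt d) (U : Fin m → Pt d)
    (μ : Fin m → ℝ) : z + ∑ k, μ k • U k ∈ Parallelepiped (z + ∑ k, (⌊μ k⌋ : ℝ) • U k) U :=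
  ⟨fun k ↦ Int.fract (μ k), fun k ↦ ⟨Int.fract_nonneg _, (Int.fract_lt_one _).le⟩, by
    simp only [Int.fract, sub_smul, Finset.sum_sub_distrib]
    abel⟩

lemma parallelepiped_floor_subset_convexHull {d m : ℕ} (v : Fin (m + 1) → Pt d)
    (i₀ : Fin (m + 1)) {G : Fin m → ℝ} {U : Fin m → Pt d} (hG : ∀ k, 0 < G k)
    (hGU : ∀ k, v (i₀.succAbove k) - v i₀ = G k • U k) {μ : Fin m → ℝ} (hμ₀ : ∀ k, 0 ≤ μ k)
    (hμ₁ : ∑ k, (μ k + 1) / G k ≤ 1) :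
    Parallelepiped (v i₀ + ∑ k, (⌊μ k⌋ : ℝ) • U k) U ⊆ convexHull ℝ (range v) := by
  rintro q ⟨t, ht, rfl⟩
  have hU (k : Fin m) : (⌊μ k⌋ + t k) • U k =
      ((⌊μ k⌋ + t k) / G k) • (v (i₀.succAbove k) - v i₀) := by
    rw [hGU, smul_smul, div_mul_cancel₀ _ (hG k).ne']
  have hq : v i₀ + ∑ k, (⌊μ k⌋ : ℝ) • U k + ∑ k, t k • U k =
      v i₀ + ∑ k, ((⌊μ k⌋ + t k) / G k) • (v (i₀.succAbove k) - v i₀) := by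
    simp_rw [← hU, add_smul, Finset.sum_add_distrib, add_assoc]
  rw [hq]
  refine add_sum_smul_sub_succAbove_mem_convexHull v i₀ (fun k ↦ ?_) ?_
  · have : (0 : ℝ) ≤ ⌊μ k⌋ := by exact_mod_cast Int.floor_nonneg.mpr (hμ₀ k)
    exact div_nonneg (by linarith [(ht k).1]) (hG k).le
  · refine le_trans (Finset.sum_le_sum fun k _ ↦ ?_) hμ₁
    exact div_le_div_of_nonneg_right (by linarith [Int.floor_le (μ k), (ht k).2]) (hG k).le

theorem AffineBasis.exists_latticeParallelepiped {d : ℕ}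
    (b : AffineBasis (Fin (d + 1)) ℝ (Pt d)) (hlat : ∀ i, IsLatticePt (b i))
    (hedge : ∀ i j, i ≠ j →
      ∃ G : ℝ, (d : ℝ) * (d + 1) ≤ G ∧ ∃ U : Pt d, IsLatticePt U ∧ b j - b i = G • U)
    {p : Pt d} (hp : p ∈ convexHull ℝ (range b)) :
    ∃ L, IsLatticeParallelepiped L ∧ p ∈ L ∧ L ⊆ convexHull ℝ (range b) := by
  set w : Fin (d + 1) → ℝ := fun i ↦ b.coord i p
  have hw₁ : ∑ i, w i = 1 := b.sum_coord_apply_eq_one p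
  obtain ⟨i₀, -, hi₀⟩ : ∃ i₀ ∈ Finset.univ, ((d : ℝ) + 1)⁻¹ ≤ w i₀ :=
    Finset.exists_le_of_sum_le Finset.univ_nonempty
      (by simp [hw₁, mul_inv_cancel₀ (Nat.cast_add_one_ne_zero (R := ℝ) d)])
  choose G hG U hU hGU using fun k : Fin d ↦
    hedge i₀ (i₀.succAbove k) (Fin.succAbove_ne i₀ k).symm
  have hGpos (k : Fin d) : 0 < G k := by
    have : (0 : ℝ) < d := Nat.cast_pos.mpr k.pos
    exact (by positivity : (0 : ℝ) < d * (d + 1)).trans_le (hG k)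
  set μ : Fin d → ℝ := fun k ↦ w (i₀.succAbove k) * G k
  have hp_eq : p = b i₀ + ∑ k, μ k • U k := by
    conv_lhs => rw [← b.linear_combination_coord_eq_self p]
    rw [sum_smul_eq_add_sum_smul_sub_succAbove _ hw₁ i₀]
    simp [μ, w, hGU, smul_smul]
  have hμ₁ : ∑ k, (μ k + 1) / G k ≤ 1 := by
    have hsum : ∑ k, w (i₀.succAbove k) = 1 - w i₀ := by
      rw [← hw₁, Fin.sum_univ_succAbove _ i₀]; ring
    have hμG (k : Fin d) : (μ k + 1) / G k = w (i₀.succAbove k) + (G k)⁻¹ := by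
      rw [add_div, mul_div_cancel_right₀ _ (hGpos k).ne', one_div]
    simp only [hμG, Finset.sum_add_distrib, hsum]
    linarith [sum_inv_le_inv_add_one hG]
  have hUind := b.linearIndependent_of_sub_eq_smul i₀ (fun k ↦ (hGpos k).ne') hGU
  refine ⟨_, ⟨_, U, ?_, hU, hUind, rfl⟩, hp_eq ▸ add_sum_smul_mem_parallelepiped_floor _ _ μ,
    parallelepiped_floor_subset_convexHull b i₀ hGpos hGU (fun k ↦ ?_) hμ₁⟩
  · exact (latticeSubgroup d).add_mem (hlat i₀) ((latticeSubgroup d).sum_mem fun k _ ↦ by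
      rw [Int.cast_smul_eq_zsmul]
      exact (latticeSubgroup d).zsmul_mem (hU k) _)
  · exact mul_nonneg (b.coord_nonneg_of_mem_convexHull hp _) (hGpos k).le

lemma exists_sum_natCast_add_eq (n : ℕ) {γ : ℝ} (h₀ : 0 ≤ γ) (h₁ : γ ≤ n + 1) :
    ∃ (m : Fin n → ℕ) (r : ℝ), (∀ j, m j ≤ 1) ∧ r ∈ Icc (0 : ℝ) 1 ∧ ∑ j, (m j : ℝ) + r = γ := by
  induction n generalizing γ with
  | zero => exact ⟨Fin.elim0, γ, fun j ↦ j.elim0, ⟨h₀, by simpa using h₁⟩, by simp⟩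
  | succ n ih =>
    by_cases hγ : γ ≤ n + 1
    · obtain ⟨m, r, hm, hr, hsum⟩ := ih h₀ hγ
      refine ⟨Fin.cons 0 m, r, Fin.cons (by simp) hm, hr, ?_⟩
      simpa [Fin.sum_univ_succ] using hsum
    · obtain ⟨m, r, hm, hr, hsum⟩ := ih (γ := γ - 1) (by linarith) (by push_cast at h₁; linarith)
      refine ⟨Fin.cons 1 m, r, Fin.cons le_rfl hm, hr, ?_⟩
      simp only [Fin.sum_univ_succ, Fin.cons_zero, Fin.cons_succ, Nat.cast_one]
      linarith

lemma exists_sum_eq_of_mem_smul_parallelepiped {d m : ℕ} {z₀ : Pt d} {U : Fin m → Pt d}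
    (hz₀ : IsLatticePt z₀) (hU : ∀ k, IsLatticePt (U k)) (n : ℕ) {z : Pt d}
    (hz : z ∈ ((n + 1 : ℕ) : ℝ) • Parallelepiped z₀ U) (hzlat : IsLatticePt z) :
    ∃ x : Fin (n + 1) → Pt d,
      (∀ i, x i ∈ Parallelepiped z₀ U ∧ IsLatticePt (x i)) ∧ ∑ i, x i = z := by
  obtain ⟨_, ⟨t, ht, rfl⟩, rfl⟩ := hz
  choose a r ha hr hsum using fun k ↦ exists_sum_natCast_add_eq n (γ := (n + 1) * t k)
    (by nlinarith [(ht k).1]) (by nlinarith [(ht k).2])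
  set y : Fin n → Pt d := fun j ↦ z₀ + ∑ k, (a k j : ℝ) • U k
  set x₀ : Pt d := z₀ + ∑ k, r k • U k
  have hy (j : Fin n) : y j ∈ Parallelepiped z₀ U ∧ IsLatticePt (y j) := by
    refine ⟨⟨fun k ↦ a k j, fun k ↦ ⟨Nat.cast_nonneg _, Nat.cast_le_one.mpr (ha k j)⟩, rfl⟩, ?_⟩
    refine (latticeSubgroup d).add_mem hz₀ ((latticeSubgroup d).sum_mem fun k _ ↦ ?_)
    rw [Nat.cast_smul_eq_nsmul]
    exact (latticeSubgroup d).nsmul_mem (hU k) _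
  have hx_sum : x₀ + ∑ j, y j = ((n + 1 : ℕ) : ℝ) • (z₀ + ∑ k, t k • U k) := by
    simp only [x₀, y, Finset.sum_add_distrib, Finset.sum_const, Finset.card_univ,
      Fintype.card_fin, Finset.sum_comm (s := Finset.univ (α := Fin n)), ← Finset.sum_smul]
    simp only [smul_add, Finset.smul_sum, smul_smul, Nat.cast_succ, ← hsum, add_smul,
      Finset.sum_add_distrib, one_smul, Nat.cast_smul_eq_nsmul]
    abel
  refine ⟨Fin.cons x₀ y, Fin.cases ⟨⟨r, hr, rfl⟩, ?_⟩ hy, by rw [Fin.sum_cons, hx_sum]⟩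
  rw [eq_sub_of_add_eq hx_sum]
  exact (latticeSubgroup d).sub_mem hzlat ((latticeSubgroup d).sum_mem fun j _ ↦ (hy j).2)

lemma integrallyClosed_of_forall_mem_latticeParallelepiped {d : ℕ} {P : Set (Pt d)}
    (hP : ∀ p ∈ P, ∃ L, IsLatticeParallelepiped L ∧ p ∈ L ∧ L ⊆ P) : IntegrallyClosed P := by
  intro c hc z hz hzlat
  obtain ⟨n, rfl⟩ := Nat.exists_eq_add_one_of_ne_zero hc.ne'
  obtain ⟨p, hp, rfl⟩ := hz
  obtain ⟨_, ⟨z₀, U, hz₀, hU, -, rfl⟩, hpL, hLP⟩ := hP p hp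
  obtain ⟨x, hx, hsum⟩ :=
    exists_sum_eq_of_mem_smul_parallelepiped hz₀ hU n (smul_mem_smul_set hpL) hzlat
  exact ⟨x, fun i ↦ ⟨hLP (hx i).1, (hx i).2⟩, hsum⟩

theorem statement2_general (d : ℕ) (v : Fin (d + 1) → Pt d)
    (hind : AffineIndependent ℝ v) (hlat : ∀ i, IsLatticePt (v i))
    (P : Set (Pt d)) (hP : P = convexHull ℝ (Set.range v))
    (hedges : EdgeLengthsGE P ((d : ℝ) * ((d : ℝ) + 1))) :
    (∀ p ∈ P, ∃ L, IsLatticeParallelepiped L ∧ p ∈ L ∧ L ⊆ P) ∧ IntegrallyClosed P := by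
  let b : AffineBasis (Fin (d + 1)) ℝ (Pt d) :=
    ⟨v, hind, hind.affineSpan_eq_top_iff_card_eq_finrank_add_one.mpr (by simp)⟩
  have hPb : P = convexHull ℝ (range b) := hP
  have hcover (p) (hp : p ∈ P) : ∃ L, IsLatticeParallelepiped L ∧ p ∈ L ∧ L ⊆ P := by
    rw [hPb] at hp hedges ⊢
    refine b.exists_latticeParallelepiped hlat (fun i j hij ↦ ?_) hp
    exact hedges.exists_eq_smul ⟨hind.injective.ne hij, b.isExtreme_segment hij⟩ (hlat i) (hlat j)
  exact ⟨hcover, integrallyClosed_of_forall_mem_latticeParallelepiped hcover⟩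

/-- Theorem 1.3(b). A lattice `d`-simplex all of whose edges have lattice
length at least `d(d+1)` is covered by lattice parallelepipeds; in particular it is
integrally closed. -/
theorem statement2 (d : ℕ) (hd : 0 < d) (v : Fin (d + 1) → Pt d)
    (hind : AffineIndependent ℝ v) (hlat : ∀ i, IsLatticePt (v i))
    (P : Set (Pt d)) (hP : P = convexHull ℝ (Set.range v))
    (hedges : EdgeLengthsGE P ((d : ℝ) * ((d : ℝ) + 1))) :
    (∀ p ∈ P, ∃ L, IsLatticeParallelepiped L ∧ p ∈ L ∧ L ⊆ P) ∧ IntegrallyClosed P :=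
  statement2_general d v hind hlat P hP hedges
end
end

section
/- Let d be a positive integer, let P ⊂ ℝ^d be a rational polytope of dimension d, and let c ∈ ℚ with c ≥ d+1. Then cP = ⋃_{v ∈ vert(P)} (v + (c−1)P), the union over all vertices v of P. -/
/-!
By Carathéodory, a point `x` of a polytope `P` of dimension `n` is a convex combination of at most
`n + 1` vertices, so some vertex `v` carries weight at least `1 / (n + 1) ≥ 1 / c`. Taking `v` out
of `c • x` once leaves a nonnegative combination of vertices of total weight `c - 1`, that is, a
point of `(c - 1) • P`. Conversely `v + (c - 1) • P ⊆ P + (c - 1) • P = c • P` by convexity.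
-/

open Set Metric Pointwise

noncomputable section

open Finset Module

variable {E : Type*} [NormedAddCommGroup E] [NormedSpace ℝ E]

theorem Convex.sum_smul_mem_smul {ι : Type*} {s : Set E} (hs : Convex ℝ s) (hne : s.Nonempty)
    {t : Finset ι} {μ : ι → ℝ} {z : ι → E} (hμ : ∀ i ∈ t, 0 ≤ μ i) (hz : ∀ i ∈ t, z i ∈ s) :
    ∑ i ∈ t, μ i • z i ∈ (∑ i ∈ t, μ i) • s := by
  rcases (sum_nonneg hμ).eq_or_lt with hsum | hsum
  · have hzero : ∀ i ∈ t, μ i = 0 := (sum_eq_zero_iff_of_nonneg hμ).1 hsum.symm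
    rw [← hsum, zero_smul_set hne, sum_eq_zero fun i hi => by rw [hzero i hi, zero_smul]]
    rfl
  · have hmass := hs.centerMass_mem hμ hsum hz
    rw [Finset.centerMass] at hmass
    simpa only [smul_inv_smul₀ hsum.ne'] using Set.smul_mem_smul_set (a := ∑ i ∈ t, μ i) hmass

theorem Convex.exists_smul_sub_mem_smul {P : Set E} (hP : Convex ℝ P) {t : Finset E}
    (htP : ↑t ⊆ P) {x : E} (hx : x ∈ convexHull ℝ (t : Set E)) {c : ℝ} (hc : (#t : ℝ) ≤ c) :
    ∃ v ∈ t, c • x - v ∈ (c - 1) • P := by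
  classical
  obtain ⟨w, hw₀, hw₁, rfl⟩ := Finset.mem_convexHull'.1 hx
  have ht : t.Nonempty := nonempty_of_ne_empty (by rintro rfl; simp at hw₁)
  obtain ⟨v, hvt, hvmax⟩ := t.exists_max_image w ht
  have hcv : 1 ≤ c * w v := by
    have hmax := sum_le_card_nsmul t w (w v) hvmax
    rw [hw₁, nsmul_eq_mul] at hmax
    nlinarith [hw₀ v hvt]
  set μ : E → ℝ := fun z => c * w z - if z = v then 1 else 0
  have hμ : ∀ z ∈ t, 0 ≤ μ z := by
    intro z hz
    by_cases h : z = v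
    · simp only [μ, h, if_true]; linarith
    · simp only [μ, h, if_false, sub_zero]; nlinarith [hw₀ z hz]
  have hμsum : ∑ z ∈ t, μ z = c - 1 := by
    simp only [μ, sum_sub_distrib, ← mul_sum, hw₁, sum_ite_eq' t v, if_pos hvt, mul_one]
  have hμcomb : ∑ z ∈ t, μ z • z = c • ∑ z ∈ t, w z • z - v := by
    simp only [μ, sub_smul, sum_sub_distrib, mul_smul, ← smul_sum, ite_smul, one_smul, zero_smul,
      sum_ite_eq' t v, if_pos hvt]
  refine ⟨v, hvt, ?_⟩
  rw [← hμcomb, ← hμsum]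
  exact hP.sum_smul_mem_smul ⟨v, htP hvt⟩ hμ fun z hz => htP hz

theorem exists_finset_card_le_finrank_vectorSpan_succ [FiniteDimensional ℝ E] {s : Set E} {x : E}
    (hx : x ∈ convexHull ℝ s) :
    ∃ t : Finset E, ↑t ⊆ s ∧ #t ≤ finrank ℝ (vectorSpan ℝ s) + 1 ∧
      x ∈ convexHull ℝ (t : Set E) := by
  rw [convexHull_eq_union] at hx
  simp only [Set.mem_iUnion] at hx
  obtain ⟨t, hts, hind, hxt⟩ := hx
  refine ⟨t, hts, ?_, hxt⟩
  calc #t = Fintype.card t := (Fintype.card_coe t).symm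
    _ ≤ finrank ℝ (vectorSpan ℝ (Set.range ((↑) : t → E))) + 1 := hind.card_le_finrank_succ
    _ ≤ finrank ℝ (vectorSpan ℝ s) + 1 := by
      gcongr
      exact Submodule.finrank_mono (vectorSpan_mono ℝ (by simpa using hts))

theorem Set.Finite.convexHull_extremePoints_convexHull [FiniteDimensional ℝ E] {V : Set E}
    (hV : V.Finite) : convexHull ℝ ((convexHull ℝ V).extremePoints ℝ) = convexHull ℝ V := by
  have hext : ((convexHull ℝ V).extremePoints ℝ).Finite := hV.subset extremePoints_convexHull_subset
  rw [← (hext.isCompact_convexHull ℝ).isClosed.closure_eq]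
  exact closure_convexHull_extremePoints (hV.isCompact_convexHull ℝ) (convex_convexHull ℝ V)

theorem Convex.add_smul_mem_smul {P : Set E} (hP : Convex ℝ P) {v p : E} (hv : v ∈ P)
    (hp : p ∈ P) {c : ℝ} (hc : 1 ≤ c) : v + (c - 1) • p ∈ c • P := by
  have hsplit := hP.add_smul zero_le_one (sub_nonneg.2 hc)
  rw [add_sub_cancel] at hsplit
  rw [hsplit, one_smul]
  exact Set.add_mem_add hv (Set.smul_mem_smul_set hp)

theorem smul_eq_extremePoints_add_smul_of_finrank_succ_le [FiniteDimensional ℝ E] {P : Set E}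
    {V : Set E} (hV : V.Finite) (hPV : P = convexHull ℝ V) {c : ℝ}
    (hc : (finrank ℝ (vectorSpan ℝ P) : ℝ) + 1 ≤ c) :
    c • P = {y | ∃ v ∈ P.extremePoints ℝ, ∃ p ∈ (c - 1) • P, y = v + p} := by
  have hPconv : Convex ℝ P := hPV ▸ convex_convexHull ℝ V
  ext y
  constructor
  · rintro ⟨x, hxP, rfl⟩
    rw [hPV, ← hV.convexHull_extremePoints_convexHull, ← hPV] at hxP
    obtain ⟨t, htext, htcard, hxt⟩ := exists_finset_card_le_finrank_vectorSpan_succ hxP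
    have htc : (#t : ℝ) ≤ c := by
      have hspan := Submodule.finrank_mono
        (vectorSpan_mono ℝ (extremePoints_subset (𝕜 := ℝ) (A := P)))
      have hcard : #t ≤ finrank ℝ (vectorSpan ℝ P) + 1 := by omega
      exact le_trans (by exact_mod_cast hcard) hc
    obtain ⟨v, hvt, hv⟩ :=
      hPconv.exists_smul_sub_mem_smul (htext.trans extremePoints_subset) hxt htc
    exact ⟨v, htext hvt, _, hv, (add_sub_cancel v _).symm⟩
  · rintro ⟨v, hv, _, ⟨p, hp, rfl⟩, rfl⟩
    have hc1 : (1 : ℝ) ≤ c := by linarith [(finrank ℝ (vectorSpan ℝ P)).cast_nonneg (α := ℝ)]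
    exact hPconv.add_smul_mem_smul hv.1 hp hc1

theorem statement3_general (d : ℕ)
    (P : Set (Pt d)) (hP : IsRationalPolytope P) (hdim : polyDim P = d)
    (c : ℚ) (hc : (d : ℚ) + 1 ≤ c) :
    (c : ℝ) • P =
      {y | ∃ v ∈ Set.extremePoints ℝ P, ∃ p ∈ ((c : ℝ) - 1) • P, y = v + p} := by
  obtain ⟨V, -, hPV⟩ := hP
  refine smul_eq_extremePoints_add_smul_of_finrank_succ_le V.finite_toSet hPV ?_
  rw [← polyDim, hdim]
  exact_mod_cast hc

/-- Lemma 2.1. For a rational `d`-polytope `P` and rational `c ≥ d+1`,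
`cP = ⋃_{v ∈ vert(P)} (v + (c-1)P)`. -/
theorem statement3 (d : ℕ) (hd : 0 < d)
    (P : Set (Pt d)) (hP : IsRationalPolytope P) (hdim : polyDim P = d)
    (c : ℚ) (hc : (d : ℚ) + 1 ≤ c) :
    (c : ℝ) • P =
      {y | ∃ v ∈ Set.extremePoints ℝ P, ∃ p ∈ ((c : ℝ) - 1) • P, y = v + p} :=
  statement3_general d P hP hdim c hc
end
end

section
/- Let d be a positive integer and let P ⊂ ℝ^d be a lattice polytope of dimension d. If P is (d+1)-convex-normal, then P is integrally closed. -/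
open Set Metric Pointwise

noncomputable section

/-!
Halving: a lattice point `z ∈ cP` with `c = a + m`, `m = ⌊c/2⌋`, lies in `(c/m) P` after
scaling by `1/m`, where `c/m ∈ [2, 3]`. Convex normality at `c/m` writes `z/m = x + p` with
`p ∈ P` and `x ∈ (c/m - 1) P` congruent to a multiple of a vertex, so `m x` is a lattice
point of `aP` and `z - m x` one of `mP`; induction on `c` finishes. Only `CN(d, 3)` is used,
which `CN(d, d+1)` implies once `d ≥ 2`. In dimension one there is no room for this, but there
every lattice segment is integrally closed: an integer in `[ca, cb]` is a sum of `c` integers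
in `[a, b]`.
-/

namespace IsLatticePt

variable {d : ℕ} {x y : Pt d}

lemma add (hx : IsLatticePt x) (hy : IsLatticePt y) : IsLatticePt (x + y) := fun i => by
  obtain ⟨a, ha⟩ := hx i
  obtain ⟨b, hb⟩ := hy i
  exact ⟨a + b, by simp [ha, hb]⟩

lemma sub (hx : IsLatticePt x) (hy : IsLatticePt y) : IsLatticePt (x - y) := fun i => by
  obtain ⟨a, ha⟩ := hx i
  obtain ⟨b, hb⟩ := hy i
  exact ⟨a - b, by simp [ha, hb]⟩

lemma natCast_smul (n : ℕ) (hx : IsLatticePt x) : IsLatticePt ((n : ℝ) • x) := fun i => by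
  obtain ⟨a, ha⟩ := hx i
  exact ⟨n * a, by simp [ha]⟩

end IsLatticePt

lemma IsLatticePolytope.isLatticePt_of_mem_extremePoints {d : ℕ} {P : Set (Pt d)}
    (hP : IsLatticePolytope P) {v : Pt d} (hv : v ∈ P.extremePoints ℝ) : IsLatticePt v := by
  obtain ⟨V, hV, rfl⟩ := hP
  exact hV v (extremePoints_convexHull_subset hv)

def IsSumOfLatticePoints {d : ℕ} (P : Set (Pt d)) (c : ℕ) (z : Pt d) : Prop :=
  ∃ x : Fin c → Pt d, (∀ i, x i ∈ P ∧ IsLatticePt (x i)) ∧ ∑ i, x i = z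

lemma isSumOfLatticePoints_one {d : ℕ} {P : Set (Pt d)} {z : Pt d} (hz : z ∈ P)
    (hzl : IsLatticePt z) : IsSumOfLatticePoints P 1 z :=
  ⟨fun _ => z, fun _ => ⟨hz, hzl⟩, by simp⟩

lemma IsSumOfLatticePoints.add {d : ℕ} {P : Set (Pt d)} {a b : ℕ} {y w : Pt d}
    (hy : IsSumOfLatticePoints P a y) (hw : IsSumOfLatticePoints P b w) :
    IsSumOfLatticePoints P (a + b) (y + w) := by
  obtain ⟨x, hx, rfl⟩ := hy
  obtain ⟨x', hx', rfl⟩ := hw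
  exact ⟨Fin.append x x', Fin.addCases (by simpa using hx) (by simpa using hx'),
    by simp [Fin.sum_univ_add]⟩

theorem ConvexNormal.exists_split {d : ℕ} {k : ℚ} {P : Set (Pt d)} (hcn : ConvexNormal k P)
    (hP : IsLatticePolytope P) {a m : ℕ} (hm : 0 < m) (hma : m ≤ a) (hk : (a + m : ℚ) ≤ k * m)
    {z : Pt d} (hz : z ∈ ((a + m : ℕ) : ℝ) • P) (hzl : IsLatticePt z) :
    ∃ y ∈ (a : ℝ) • P, IsLatticePt y ∧ z - y ∈ (m : ℝ) • P ∧ IsLatticePt (z - y) := by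
  have hm0 : (m : ℝ) ≠ 0 := by positivity
  set q : ℚ := (a + m) / m with hq
  have hq2 : 2 ≤ q := by
    rw [hq, le_div_iff₀ (by positivity)]
    exact_mod_cast (by omega : 2 * m ≤ a + m)
  have hqk : q ≤ k := by rwa [hq, div_le_iff₀ (by positivity)]
  have hqm : (m : ℝ) * ((q : ℝ) - 1) = a := by
    rw [hq]
    push_cast
    field_simp
    ring
  have hzq : (m : ℝ)⁻¹ • z ∈ (q : ℝ) • P := by
    rw [← mem_smul_set_iff_inv_smul_mem₀ hm0, smul_smul]
    convert hz using 2
    push_cast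
    linear_combination hqm
  rw [hcn q hq2 hqk] at hzq
  obtain ⟨v, hv, x, hx, hxv, p, hp, hxp⟩ := hzq
  have hzx : z - (m : ℝ) • x = (m : ℝ) • p := by
    rw [← smul_inv_smul₀ hm0 z, hxp, smul_add, add_sub_cancel_left]
  have hmx : (m : ℝ) • x = (m : ℝ) • (x - ((q : ℝ) - 1) • v) + (a : ℝ) • v := by
    rw [smul_sub, smul_smul, hqm, sub_add_cancel]
  have hmxl : IsLatticePt ((m : ℝ) • x) := hmx ▸
    (hxv.natCast_smul m).add ((hP.isLatticePt_of_mem_extremePoints hv).natCast_smul a)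
  refine ⟨(m : ℝ) • x, ?_, hmxl, hzx ▸ smul_mem_smul_set hp, hzl.sub hmxl⟩
  rw [← hqm, mul_smul]
  exact smul_mem_smul_set hx

theorem ConvexNormal.integrallyClosed {d : ℕ} {k : ℚ} {P : Set (Pt d)} (hcn : ConvexNormal k P)
    (hk : 3 ≤ k) (hP : IsLatticePolytope P) : IntegrallyClosed P := by
  intro c
  induction c using Nat.strong_induction_on with
  | _ c ih =>
  intro hc z hz hzl
  obtain rfl | hc2 := eq_or_lt_of_le (Nat.succ_le_of_lt hc)
  · exact isSumOfLatticePoints_one (by simpa using hz) hzl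
  obtain ⟨a, m, rfl, hm, hma, ham⟩ : ∃ a m, c = a + m ∧ 0 < m ∧ m ≤ a ∧ a ≤ 2 * m :=
    ⟨c - c / 2, c / 2, by omega, by omega, by omega, by omega⟩
  have hk' : (a + m : ℚ) ≤ k * m :=
    calc (a + m : ℚ) ≤ 3 * m := by exact_mod_cast (by omega : a + m ≤ 3 * m)
      _ ≤ k * m := by gcongr
  obtain ⟨y, hy, hyl, hzy, hzyl⟩ := hcn.exists_split hP hm hma hk' hz hzl
  have hsum := IsSumOfLatticePoints.add (ih a (by omega) (by omega) y hy hyl)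
    (ih m (by omega) hm _ hzy hzyl)
  rwa [add_sub_cancel] at hsum

theorem Int.exists_fin_sum_eq_of_mem_Icc {a b : ℤ} :
    ∀ {c : ℕ} {N : ℤ}, N ∈ Icc (c * a) (c * b) →
      ∃ s : Fin c → ℤ, (∀ i, s i ∈ Icc a b) ∧ ∑ i, s i = N
  | 0, N, hN => ⟨fun _ => 0, Fin.rec0, by simp at hN ⊢; omega⟩
  | k + 1, N, ⟨h₁, h₂⟩ => by
    have hab : a ≤ b := le_of_mul_le_mul_left (h₁.trans h₂) (by positivity)
    have hk : (k : ℤ) * a ≤ k * b := mul_le_mul_of_nonneg_left hab (by positivity)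
    push_cast [add_mul, one_mul] at h₁ h₂
    obtain ⟨s, hs, hsum⟩ := exists_fin_sum_eq_of_mem_Icc (a := a) (b := b) (c := k)
      (N := N - max a (min b (N - k * a))) ⟨by omega, by omega⟩
    refine ⟨Fin.cons (max a (min b (N - k * a))) s, Fin.cases ?_ (by simpa using hs),
      by simp [hsum]⟩
    simp only [Fin.cons_zero]
    exact ⟨le_max_left _ _, by omega⟩

theorem IsLatticePolytope.integrallyClosed_of_dim_one {P : Set (Pt 1)}
    (hP : IsLatticePolytope P) : IntegrallyClosed P := by
  obtain ⟨V, hVl, rfl⟩ := hP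
  rintro c - _ ⟨p, hp, rfl⟩ hzl
  have hV : V.Nonempty := Finset.coe_nonempty.mp (convexHull_nonempty_iff.mp ⟨p, hp⟩)
  obtain ⟨u, huV, hu⟩ := V.exists_min_image (· 0) hV
  obtain ⟨w, hwV, hw⟩ := V.exists_max_image (· 0) hV
  obtain ⟨a, ha⟩ := hVl u huV 0
  obtain ⟨b, hb⟩ := hVl w hwV 0
  have hbound : p 0 ∈ Icc (a : ℝ) b := by
    refine convexHull_min (t := (EuclideanSpace.proj 0 : Pt 1 →L[ℝ] ℝ) ⁻¹' Icc (a : ℝ) b)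
      (fun x hx => ⟨ha ▸ hu x hx, hb ▸ hw x hx⟩) ?_ hp
    exact (convex_Icc _ _).linear_preimage (EuclideanSpace.proj 0 : Pt 1 →L[ℝ] ℝ).toLinearMap
  have hmem : ∀ n ∈ Icc a b,
      EuclideanSpace.single 0 (n : ℝ) ∈ convexHull ℝ (V : Set (Pt 1)) := by
    intro n hn
    obtain ⟨s, t, hs, ht, hst, h⟩ := Icc_subset_segment
      (⟨ha ▸ Int.cast_le.mpr hn.1, hb ▸ Int.cast_le.mpr hn.2⟩ : (n : ℝ) ∈ Icc (u 0) (w 0))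
    convert convex_convexHull ℝ _ (subset_convexHull ℝ _ huV) (subset_convexHull ℝ _ hwV) hs ht hst
    ext i
    fin_cases i
    simpa using h.symm
  obtain ⟨N, hN⟩ := hzl 0
  have hNc : N ∈ Icc (c * a) (c * b) := by
    have hNr : (N : ℝ) = c * p 0 := by simp [← hN]
    constructor
    · exact_mod_cast hNr ▸ mul_le_mul_of_nonneg_left hbound.1 c.cast_nonneg
    · exact_mod_cast hNr ▸ mul_le_mul_of_nonneg_left hbound.2 c.cast_nonneg
  obtain ⟨s, hs, hsum⟩ := Int.exists_fin_sum_eq_of_mem_Icc hNc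
  refine ⟨fun i => EuclideanSpace.single 0 (s i : ℝ), fun i => ⟨hmem _ (hs i), fun j => ?_⟩, ?_⟩
  · exact ⟨s i, by fin_cases j; simp⟩
  · ext j
    fin_cases j
    simp [hN, ← hsum]

theorem statement4_general (d : ℕ) (hd : 0 < d)
    (P : Set (Pt d)) (hP : IsLatticePolytope P)
    (hcn : ConvexNormal ((d : ℚ) + 1) P) :
    IntegrallyClosed P := by
  obtain rfl | hd2 : d = 1 ∨ 2 ≤ d := by omega
  · exact hP.integrallyClosed_of_dim_one
  · exact hcn.integrallyClosed (by norm_cast; omega) hP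

/-- Lemma 2.4(a). A `(d+1)`-convex-normal lattice `d`-polytope is
integrally closed. -/
theorem statement4 (d : ℕ) (hd : 0 < d)
    (P : Set (Pt d)) (hP : IsLatticePolytope P) (hdim : polyDim P = d)
    (hcn : ConvexNormal ((d : ℚ) + 1) P) :
    IntegrallyClosed P :=
  statement4_general d hd P hP hcn
end
end

section
/- Let d be a positive integer and let □ ⊂ ℝ^d be a rational parallelepiped of dimension d, i.e., □ = z + {Σ_{i=1}^d λ_i·w_i : 0 ≤ λ_i ≤ 1} with z ∈ ℚ^d and w₁,…,w_d ∈ ℚ^d linearly independent. If every edge of □ has lattice length at least 1, then for every rational c ≥ 1 one has c□ = ⋃ (x + □), where the union is over all vertices v of □ and all x ∈ (c−1)□ ∩ ((c−1)v + ℤ^d). -/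
open Set Metric Pointwise

noncomputable section

/-!
Write the points of `c • □` as `c • z + ∑ aᵢ • wᵢ` with `aᵢ ∈ [0, c]`. The edge condition says
`wᵢ = tᵢ • uᵢ` with `uᵢ ∈ ℤ^d` and `tᵢ ≥ 1`, so the covering can be found one coordinate at a
time: pick `sᵢ ∈ {0, 1}` and `μᵢ ∈ (c - 1) sᵢ + tᵢ⁻¹ ℤ` with `μᵢ ∈ [0, c - 1]` and
`aᵢ - μᵢ ∈ [0, 1]` (`μᵢ = c - 1` if `aᵢ > c - 1`, and `μᵢ = ⌊aᵢ tᵢ⌋ / tᵢ` otherwise, which works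
because `tᵢ ≥ 1`). The vertex `z + ∑ sᵢ • wᵢ` and the point `(c - 1) • z + ∑ μᵢ • wᵢ` then
exhibit membership in the union. The reverse inclusion is convexity: `(c - 1) • □ + □ = c • □`.
-/

section Extreme

variable {𝕜 E F ι : Type*} [Ring 𝕜] [PartialOrder 𝕜] [AddCommGroup E] [Module 𝕜 E]
  [AddCommGroup F] [Module 𝕜 F]

theorem IsExtreme.image_of_injective [AddRightMono 𝕜] {A B : Set E} (hAB : IsExtreme 𝕜 A B)
    (f : E →ᵃ[𝕜] F) (hf : Function.Injective f) : IsExtreme 𝕜 (f '' A) (f '' B) := by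
  refine ⟨image_mono hAB.1, ?_⟩
  rintro _ ⟨x₁, hx₁, rfl⟩ _ ⟨x₂, hx₂, rfl⟩ _ ⟨x, hxB, rfl⟩ hx
  rw [← image_openSegment, hf.mem_set_image] at hx
  exact mem_image_of_mem f (hAB.2 hx₁ hx₂ hxB hx)

theorem IsExtreme.univ_pi {M : ι → Type*} [∀ i, AddCommGroup (M i)] [∀ i, Module 𝕜 (M i)]
    {A B : ∀ i, Set (M i)} (h : ∀ i, IsExtreme 𝕜 (A i) (B i)) :
    IsExtreme 𝕜 (univ.pi A) (univ.pi B) := by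
  refine ⟨pi_mono fun i _ => (h i).1, ?_⟩
  rintro x₁ hx₁ x₂ hx₂ x hx ⟨a, b, ha, hb, hab, rfl⟩
  exact fun i _ =>
    (h i).2 (hx₁ i trivial) (hx₂ i trivial) (hx i trivial) ⟨a, b, ha, hb, hab, rfl⟩

end Extreme

theorem segment_zero_single_eq_univ_pi {ι : Type*} [DecidableEq ι] (k : ι) :
    segment ℝ 0 (Pi.single k 1 : ι → ℝ) =
      univ.pi (Function.update (fun _ => {0}) k (Icc 0 1)) := by
  ext x
  simp only [segment_eq_image', sub_zero, zero_add, mem_image, mem_univ_pi]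
  constructor
  · rintro ⟨θ, hθ, rfl⟩ j
    rcases eq_or_ne j k with rfl | hj <;> simp [*]
  · intro hx
    refine ⟨x k, by simpa using hx k, funext fun j => ?_⟩
    rcases eq_or_ne j k with rfl | hj
    · simp
    · simpa [hj, eq_comm] using hx j

namespace Parallelepiped

variable {d m : ℕ} {z : Pt d} {w : Fin m → Pt d}

def param (z : Pt d) (w : Fin m → Pt d) : (Fin m → ℝ) →ᵃ[ℝ] Pt d where
  toFun lam := z + ∑ i, lam i • w i
  linear := Fintype.linearCombination ℝ w
  map_vadd' lam v := by
    simp only [Pi.vadd_apply', vadd_eq_add, add_smul, Finset.sum_add_distrib,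
      Fintype.linearCombination_apply]
    abel

theorem param_apply (lam : Fin m → ℝ) :
    param z w lam = z + ∑ i, lam i • w i := rfl

theorem param_injective (hw : LinearIndependent ℝ w) :
    Function.Injective (param z w) := fun _ _ h =>
  hw.fintypeLinearCombination_injective (add_left_cancel h)

theorem eq_image_cube :
    Parallelepiped z w = param z w '' univ.pi fun _ => Icc 0 1 := by
  ext x
  simp only [Parallelepiped, mem_ofPred_eq, mem_image, mem_univ_pi, param_apply, eq_comm]

theorem convex : Convex ℝ (Parallelepiped z w) := by
  rw [eq_image_cube]
  exact (convex_pi fun _ _ => convex_Icc 0 1).affine_image _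

theorem vertex_mem_extremePoints (hw : LinearIndependent ℝ w) {s : Fin m → ℝ}
    (hs : ∀ i, s i ∈ ({0, 1} : Set ℝ)) :
    z + ∑ i, s i • w i ∈ extremePoints ℝ (Parallelepiped z w) := by
  have hcube : IsExtreme ℝ (univ.pi fun _ => Icc (0 : ℝ) 1) {s} := by
    rw [isExtreme_singleton, extremePoints_pi]
    intro i _
    rw [extremePoints_Icc zero_le_one]
    exact hs i
  simpa [eq_image_cube, param_apply] using
    hcube.image_of_injective _ (param_injective hw)

theorem isEdge (hw : LinearIndependent ℝ w) (k : Fin m) :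
    IsEdge (Parallelepiped z w) z (z + w k) := by
  refine ⟨by simpa using hw.ne_zero k, ?_⟩
  have hcube : IsExtreme ℝ (univ.pi fun _ => Icc (0 : ℝ) 1) (segment ℝ 0 (Pi.single k 1)) := by
    rw [segment_zero_single_eq_univ_pi]
    refine IsExtreme.univ_pi fun j => ?_
    rcases eq_or_ne j k with rfl | hj
    · rw [Function.update_self]; exact .rfl
    · rw [Function.update_of_ne hj, isExtreme_singleton, extremePoints_Icc zero_le_one]
      exact Or.inl rfl
  simpa [eq_image_cube, image_segment, param_apply, Pi.single_apply] using
    hcube.image_of_injective _ (param_injective hw)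

theorem mem_smul_iff {r : ℝ} (hr : 0 ≤ r) {x : Pt d} :
    x ∈ r • Parallelepiped z w ↔
      ∃ a : Fin m → ℝ, (∀ i, a i ∈ Icc 0 r) ∧ x = r • z + ∑ i, a i • w i := by
  constructor
  · rintro ⟨_, ⟨lam, hlam, rfl⟩, rfl⟩
    refine ⟨fun i => r * lam i,
      fun i => ⟨mul_nonneg hr (hlam i).1, mul_le_of_le_one_right hr (hlam i).2⟩, ?_⟩
    simp [smul_add, Finset.smul_sum, smul_smul]
  · rintro ⟨a, ha, rfl⟩
    rcases hr.eq_or_lt with rfl | hr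
    · have ha0 i : a i = 0 := le_antisymm (ha i).2 (ha i).1
      exact ⟨z, ⟨0, fun _ => by simp, by simp⟩, by simp [ha0]⟩
    · refine ⟨z + ∑ i, (a i / r) • w i,
        ⟨fun i => a i / r, fun i => ⟨by simp [div_nonneg (ha i).1 hr.le], ?_⟩, rfl⟩, ?_⟩
      · exact (div_le_one hr).2 (ha i).2
      · simp [smul_add, Finset.smul_sum, smul_smul, mul_div_cancel₀ _ hr.ne']

end Parallelepiped

theorem isLatticePt_sum_intCast_smul {d m : ℕ} {U : Fin m → Pt d} (hU : ∀ i, IsLatticePt (U i))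
    (k : Fin m → ℤ) : IsLatticePt (∑ i, (k i : ℝ) • U i) := by
  choose n hn using hU
  exact fun j => ⟨∑ i, k i * n i j, by simp [WithLp.ofLp_sum, hn]⟩

theorem IsRatPt.exists_primitive_multiple {d : ℕ} {x : Pt d} (hx : IsRatPt x) (hx0 : x ≠ 0) :
    ∃ t : ℝ, 0 < t ∧ ∃ u : Fin d → ℤ, IsPrimitive u ∧ ∀ i, x i = t * u i := by
  choose q hq using hx
  set N : ℕ := ∏ i, (q i).den
  have hN : (0 : ℝ) < N := by positivity
  have hint i : ∃ m : ℤ, x i = m / N := by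
    obtain ⟨r, hr⟩ := Finset.dvd_prod_of_mem (fun i => (q i).den) (Finset.mem_univ i)
    refine ⟨(q i).num * r, ?_⟩
    rw [hq, eq_div_iff hN.ne', show (N : ℝ) = (q i).den * r by exact_mod_cast hr, ← mul_assoc]
    exact_mod_cast congrArg (· * (r : ℚ)) (Rat.mul_den_eq_num (q i))
  choose m hm using hint
  have hm0 : ∃ i, m i ≠ 0 := by
    by_contra! h
    exact hx0 (by ext i; simp [hm, h])
  obtain ⟨i₀, hi₀⟩ := hm0
  set g := Finset.univ.gcd m
  choose u hu using fun i => Finset.gcd_dvd (s := Finset.univ) (f := m) (Finset.mem_univ i)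
  have hg0 : g ≠ 0 := fun h => hi₀ (Finset.gcd_eq_zero_iff.1 h i₀ (Finset.mem_univ _))
  have hg : 0 < g := (Int.nonneg_of_normalize_eq_self Finset.normalize_gcd).lt_of_ne' hg0
  refine ⟨g / N, by positivity, u, Finset.extract_gcd' m u ⟨i₀, Finset.mem_univ _, hi₀⟩
    (fun i _ => hu i), fun i => ?_⟩
  rw [hm, hu]
  push_cast
  ring

theorem EdgeLengthsGE.exists_eq_smul_latticePt {d : ℕ} {P : Set (Pt d)} {lb : ℝ}
    (h : EdgeLengthsGE P lb) {v x : Pt d} (hedge : IsEdge P v (v + x)) (hx : IsRatPt x) :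
    ∃ t : ℝ, lb ≤ t ∧ ∃ U : Pt d, IsLatticePt U ∧ x = t • U := by
  obtain ⟨t, ht, u, hu, hxu⟩ := hx.exists_primitive_multiple (by simpa using hedge.1)
  refine ⟨t, h v (v + x) hedge u t ht hu fun i => by simp [hxu], WithLp.toLp 2 fun i => u i,
    fun i => ⟨u i, rfl⟩, ?_⟩
  ext i
  simp [hxu]

theorem exists_lattice_translate_covering {c a t : ℝ} (hc : 1 ≤ c) (ha : a ∈ Icc 0 c)
    (ht : 1 ≤ t) : ∃ s ∈ ({0, 1} : Set ℝ), ∃ k : ℤ,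
      (c - 1) * s + k / t ∈ Icc 0 (c - 1) ∩ Icc (a - 1) a := by
  rcases le_or_gt a (c - 1) with hac | hac
  · refine ⟨0, by simp, ⌊a * t⌋, ?_⟩
    have ht0 : 0 < t := by linarith
    have h1 : (⌊a * t⌋ : ℝ) / t ≤ a := by
      rw [div_le_iff₀ ht0]; exact Int.floor_le _
    have h2 : a - 1 ≤ (⌊a * t⌋ : ℝ) / t := by
      rw [le_div_iff₀ ht0]; nlinarith [Int.lt_floor_add_one (a * t)]
    have h3 : (0 : ℝ) ≤ (⌊a * t⌋ : ℝ) / t :=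
      div_nonneg (by exact_mod_cast Int.floor_nonneg.2 (mul_nonneg ha.1 ht0.le)) ht0.le
    simp only [mul_zero, zero_add, mem_inter_iff, mem_Icc]
    exact ⟨⟨h3, h1.trans hac⟩, h2, h1⟩
  · refine ⟨1, by simp, 0, ?_⟩
    simp only [mul_one, Int.cast_zero, zero_div, add_zero, mem_inter_iff, mem_Icc]
    exact ⟨⟨by linarith, le_rfl⟩, by linarith [ha.2], hac.le⟩

theorem cnUnion_subset_smul {d : ℕ} {P : Set (Pt d)} (hP : Convex ℝ P) {c : ℝ} (hc : 1 ≤ c) :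
    cnUnion P c ⊆ c • P := by
  rintro _ ⟨-, -, x, hx, -, p, hp, rfl⟩
  have h := hP.add_smul (sub_nonneg.2 hc) zero_le_one
  rw [sub_add_cancel, one_smul] at h
  exact h ▸ add_mem_add hx hp

theorem smul_parallelepiped_subset_cnUnion {d m : ℕ} {z : Pt d} {w : Fin m → Pt d}
    (hw : LinearIndependent ℝ w)
    (hlat : ∀ i, ∃ t : ℝ, 1 ≤ t ∧ ∃ U : Pt d, IsLatticePt U ∧ w i = t • U)
    {c : ℝ} (hc : 1 ≤ c) : c • Parallelepiped z w ⊆ cnUnion (Parallelepiped z w) c := by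
  intro y hy
  obtain ⟨a, ha, rfl⟩ := (Parallelepiped.mem_smul_iff (zero_le_one.trans hc)).1 hy
  choose t ht U hU hwU using hlat
  choose s hs k hk using fun i => exists_lattice_translate_covering hc (ha i) (ht i)
  set μ : Fin m → ℝ := fun i => (c - 1) * s i + k i / t i with hμ
  refine ⟨z + ∑ i, s i • w i, Parallelepiped.vertex_mem_extremePoints hw hs,
    (c - 1) • z + ∑ i, μ i • w i,
    (Parallelepiped.mem_smul_iff (sub_nonneg.2 hc)).2 ⟨μ, fun i => (hk i).1, rfl⟩, ?_,
    z + ∑ i, (a i - μ i) • w i, ⟨a - μ, fun i => ?_, rfl⟩, ?_⟩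
  · convert isLatticePt_sum_intCast_smul hU k using 1
    rw [smul_add, add_sub_add_left_eq_sub, Finset.smul_sum, ← Finset.sum_sub_distrib]
    refine Finset.sum_congr rfl fun i _ => ?_
    have ht0 : t i ≠ 0 := by linarith [ht i]
    rw [hwU, smul_smul, smul_smul, smul_smul, ← sub_smul]
    congr 1
    simp only [hμ]
    field_simp
    ring
  · have hμi := (hk i).2
    simp only [mem_Icc, Pi.sub_apply] at hμi ⊢
    constructor <;> linarith
  · rw [add_add_add_comm, ← Finset.sum_add_distrib]
    simp only [← add_smul, add_sub_cancel]
    module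

theorem statement5_general (d : ℕ) (z : Pt d) (w : Fin d → Pt d)
    (hw : ∀ i, IsRatPt (w i)) (hind : LinearIndependent ℝ w)
    (P : Set (Pt d)) (hP : P = Parallelepiped z w)
    (hedges : EdgeLengthsGE P 1)
    (c : ℚ) (hc : 1 ≤ c) :
    (c : ℝ) • P = cnUnion P (c : ℝ) := by
  subst hP
  have hc' : (1 : ℝ) ≤ c := by exact_mod_cast hc
  have hlat i := hedges.exists_eq_smul_latticePt (Parallelepiped.isEdge hind i) (hw i)
  exact (smul_parallelepiped_subset_cnUnion hind hlat hc').antisymm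
    (cnUnion_subset_smul Parallelepiped.convex hc')

/-- Lemma 2.4(b). For a rational `d`-parallelepiped all of whose edges have
lattice length at least `1`, the convex-normality equality holds for every rational `c ≥ 1`. -/
theorem statement5 (d : ℕ) (hd : 0 < d) (z : Pt d) (w : Fin d → Pt d)
    (hz : IsRatPt z) (hw : ∀ i, IsRatPt (w i)) (hind : LinearIndependent ℝ w)
    (P : Set (Pt d)) (hP : P = Parallelepiped z w)
    (hedges : EdgeLengthsGE P 1)
    (c : ℚ) (hc : 1 ≤ c) :
    (c : ℝ) • P = cnUnion P (c : ℝ) :=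
  statement5_general d z w hw hind P hP hedges c hc
end
end

section
/- Let d ≥ 2 be an integer, k ∈ ℚ with k ≥ 2, and λ ∈ ℚ with λ > 0. Assume that every rational polytope Q ⊂ ℝ^d of dimension d−1 all of whose edges have lattice length at least (d/(d+1))·λ satisfies, for every rational c with 2 ≤ c ≤ k + (k−1)/d, the equality cQ = ⋃ (x + Q), the union over all vertices v of Q and all x ∈ (c−1)Q ∩ ((c−1)v + ℤ^d). Let P ⊂ ℝ^d be a rational polytope of dimension d all of whose edges have lattice length at least λ, let w be a vertex of P, let F be a facet of P with w ∉ F, and set Δ = conv({w} ∪ F) and ε = dist(w, aff(F))/(d+1). Then for every rational c with 2 ≤ c ≤ k, the set {x ∈ cΔ : dist(x, aff(cF)) ≤ ε} is contained in ⋃ (x + P), the union over all vertices v of P and all x ∈ (c−1)P ∩ ((c−1)v + ℤ^d). -/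
open Set Metric Pointwise

noncomputable section

/-!
Let `θ = d/(d+1)` and let `Q` be the image of `F` under the homothety with centre `w` and ratio `θ`:
a rational `(d-1)`-polytope whose edges have lattice length at least `θλ`. For `c' = c + (c-1)/d`
one has `θ(c'-1) = c-1`, so a decomposition `c'q = x' + p'` in `c'Q` provided by the hypothesis
pulls back along the homothety to a decomposition in `P`: the lattice part `x'` becomes a point of
`(c-1)F`, and the remaining part is a convex combination of `w`, a point of `F` and a point of
`P`. This works exactly for the points of `cΔ` whose `w`-coordinate is at most `1/(d+1) = 1 - θ`,
which is the `ε`-layer along `cF`.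
-/

open AffineMap

section Convex

variable {E : Type*} [NormedAddCommGroup E]

theorem infDist_lineMap_of_mem [InnerProductSpace ℝ E] [FiniteDimensional ℝ E]
    {A : AffineSubspace ℝ E} {f : E} (hf : f ∈ A) (w : E) {a : ℝ} (ha : 0 ≤ a) :
    infDist (lineMap f w a) A = a * infDist w A := by
  have : Nonempty A := ⟨⟨f, hf⟩⟩
  let π : E →ᵃ[ℝ] E := A.subtype.comp (EuclideanGeometry.orthogonalProjection A)
  have hπf : π f = f := by simp [π, EuclideanGeometry.orthogonalProjection_eq_self_iff.2 hf]
  rw [← EuclideanGeometry.dist_orthogonalProjection_eq_infDist,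
    ← EuclideanGeometry.dist_orthogonalProjection_eq_infDist]
  change dist _ (π _) = a * dist w (π w)
  rw [apply_lineMap, hπf, lineMap_apply_module', lineMap_apply_module', dist_eq_norm,
    dist_eq_norm, show a • (w - f) + f - (a • (π w - f) + f) = a • (w - π w) by module,
    norm_smul, Real.norm_of_nonneg ha]

variable [NormedSpace ℝ E]

theorem IsExtreme.mem_of_mem_affineSpan [FiniteDimensional ℝ E] {A F : Set E}
    (hAF : IsExtreme ℝ A F) (hF : Convex ℝ F) {w : E} (hwA : w ∈ A) (hw : w ∈ affineSpan ℝ F) :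
    w ∈ F := by
  obtain ⟨_, ⟨x, hx, rfl⟩⟩ :=
    Set.Nonempty.intrinsicInterior hF ((affineSpan_nonempty ℝ).1 ⟨w, hw⟩)
  have : Nonempty (affineSpan ℝ F) := ⟨⟨w, hw⟩⟩
  -- `x` is a relative interior point, so the segment from `w` through `x` extends beyond `x` in `F`
  have hlim : lineMap (⟨w, hw⟩ : affineSpan ℝ F) x (1 : ℝ) = x := lineMap_apply_one _ _
  obtain ⟨t, ht1, ht⟩ := lineMap_continuous.tendsto' _ _ hlim |>.eventually_mem
    (mem_interior_iff_mem_nhds.1 hx) |>.exists_gt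
  have hy : lineMap w (x : E) t ∈ F := by simpa [lineMap_apply] using ht
  have hseg : (x : E) ∈ openSegment ℝ w (lineMap w (x : E) t) := by
    nth_rw 1 [← lineMap_apply_zero (k := ℝ) w (x : E), ← image_openSegment]
    exact ⟨1, Ioo_subset_openSegment ⟨zero_lt_one, ht1⟩, lineMap_apply_one _ _⟩
  exact hAF.left_mem_of_mem_openSegment hwA (hAF.1 hy)
    (interior_subset hx : x ∈ Subtype.val ⁻¹' F) hseg

theorem IsExtreme.eq_convexHull_inter {V F : Set E} (hV : V.Finite)
    (hVF : IsExtreme ℝ (convexHull ℝ V) F) (hFc : Convex ℝ F) (hFcl : IsClosed F) :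
    F = convexHull ℝ (V ∩ F) := by
  refine Subset.antisymm ?_ (convexHull_min inter_subset_right hFc)
  have hFcpt : IsCompact F := (hV.isCompact_convexHull ℝ).of_isClosed_subset hFcl hVF.1
  have hext : extremePoints ℝ F ⊆ V ∩ F := fun x hx =>
    ⟨extremePoints_convexHull_subset (hVF.extremePoints_subset_extremePoints hx), hx.1⟩
  calc F = closure (convexHull ℝ (extremePoints ℝ F)) :=
        (closure_convexHull_extremePoints hFcpt hFc).symm
    _ ⊆ closure (convexHull ℝ (V ∩ F)) := closure_mono (convexHull_mono hext)
    _ = convexHull ℝ (V ∩ F) := ((hV.inter_of_left F).isClosed_convexHull ℝ).closure_eq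

end Convex

section AffineEquiv

variable {E F : Type*} [AddCommGroup E] [Module ℝ E] [AddCommGroup F] [Module ℝ F]

theorem AffineEquiv.isExtreme_image_iff (f : E ≃ᵃ[ℝ] F) {A B : Set E} :
    IsExtreme ℝ (f '' A) (f '' B) ↔ IsExtreme ℝ A B := by
  have : ∀ x y, f '' openSegment ℝ x y = openSegment ℝ (f x) (f y) :=
    fun x y => image_openSegment _ f.toAffineMap x y
  simp only [isExtreme_iff, image_subset_image_iff f.injective, f.surjective.forall,
    f.injective.mem_set_image, ← this]

theorem AffineEquiv.image_extremePoints (f : E ≃ᵃ[ℝ] F) (s : Set E) :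
    f '' extremePoints ℝ s = extremePoints ℝ (f '' s) := by
  ext y
  obtain ⟨x, rfl⟩ := f.surjective y
  rw [f.injective.mem_set_image, ← isExtreme_singleton, ← isExtreme_singleton, ← image_singleton,
    f.isExtreme_image_iff]

theorem isExtreme_homothety_image_iff {z : E} {θ : ℝ} (hθ : θ ≠ 0) {A B : Set E} :
    IsExtreme ℝ (homothety z θ '' A) (homothety z θ '' B) ↔ IsExtreme ℝ A B := by
  simpa using (AffineEquiv.homothetyUnitsMulHom z (Units.mk0 θ hθ)).isExtreme_image_iff

theorem homothety_image_extremePoints (z : E) {θ : ℝ} (hθ : θ ≠ 0) (s : Set E) :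
    homothety z θ '' extremePoints ℝ s = extremePoints ℝ (homothety z θ '' s) := by
  simpa using (AffineEquiv.homothetyUnitsMulHom z (Units.mk0 θ hθ)).image_extremePoints s

end AffineEquiv

section Polytope

variable {d : ℕ}

theorem polyDim_homothety_image (z : Pt d) {θ : ℝ} (hθ : θ ≠ 0) (s : Set (Pt d)) :
    polyDim (homothety z θ '' s) = polyDim s := by
  let e := AffineEquiv.homothetyUnitsMulHom z (Units.mk0 θ hθ)
  have he : (e : Pt d →ᵃ[ℝ] Pt d) '' s = homothety z θ '' s := by simp [e]
  rw [polyDim, polyDim, ← he, ← map_vectorSpan]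
  exact e.linear.finrank_map_eq _

theorem IsRatPt.homothety {z x : Pt d} (hz : IsRatPt z) (hx : IsRatPt x) (q : ℚ) :
    IsRatPt (homothety z (q : ℝ) x) := by
  intro i
  obtain ⟨a, ha⟩ := hz i
  obtain ⟨b, hb⟩ := hx i
  exact ⟨q * (b - a) + a, by simp [homothety_eq_lineMap, lineMap_apply_module', ha, hb]⟩

theorem IsRationalPolytope.image_homothety {P : Set (Pt d)} (hP : IsRationalPolytope P)
    {z : Pt d} (hz : IsRatPt z) (q : ℚ) : IsRationalPolytope (homothety z (q : ℝ) '' P) := by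
  classical
  obtain ⟨V, hV, rfl⟩ := hP
  refine ⟨V.image (homothety z (q : ℝ)), ?_, ?_⟩
  · simpa using fun v hv => hz.homothety (hV v hv) q
  · rw [Finset.coe_image, image_convexHull]

theorem IsRationalPolytope.convex {P : Set (Pt d)} (hP : IsRationalPolytope P) : Convex ℝ P := by
  obtain ⟨V, -, rfl⟩ := hP
  exact convex_convexHull ℝ _

theorem IsRationalPolytope.isRatPt_of_mem_extremePoints {P : Set (Pt d)}
    (hP : IsRationalPolytope P) {v : Pt d} (hv : v ∈ extremePoints ℝ P) : IsRatPt v := by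
  obtain ⟨V, hV, rfl⟩ := hP
  exact hV v (extremePoints_convexHull_subset hv)

theorem IsRationalPolytope.of_isFaceOf {P F : Set (Pt d)} (hP : IsRationalPolytope P)
    (hF : IsFaceOf P F) : IsRationalPolytope F := by
  classical
  obtain ⟨V, hV, rfl⟩ := hP
  refine ⟨V.filter (· ∈ F), fun v hv => hV v (Finset.mem_filter.1 hv).1, ?_⟩
  rw [Finset.coe_filter]
  exact hF.1.eq_convexHull_inter V.finite_toSet hF.2.1 hF.2.2

theorem LatLenGE.homothety {v w : Pt d} {lb : ℝ} (h : LatLenGE v w lb) (z : Pt d) {θ : ℝ}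
    (hθ : 0 < θ) : LatLenGE (homothety z θ v) (homothety z θ w) (θ * lb) := by
  intro u t ht hu hvw
  have hvw' : ∀ i, w i - v i = t / θ * (u i : ℝ) := by
    intro i
    have := hvw i
    simp only [homothety_eq_lineMap, lineMap_apply_module', PiLp.add_apply, PiLp.smul_apply,
      PiLp.sub_apply, smul_eq_mul] at this
    field_simp
    linarith
  have := h u (t / θ) (by positivity) hu hvw'
  rwa [le_div_iff₀ hθ, mul_comm] at this

theorem EdgeLengthsGE.of_isExtreme {P F : Set (Pt d)} {lb : ℝ} (h : EdgeLengthsGE P lb)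
    (hPF : IsExtreme ℝ P F) : EdgeLengthsGE F lb :=
  fun v w ⟨hvw, hF⟩ => h v w ⟨hvw, hPF.trans hF⟩

theorem EdgeLengthsGE.image_homothety {F : Set (Pt d)} {lb : ℝ} (h : EdgeLengthsGE F lb)
    (z : Pt d) {θ : ℝ} (hθ : 0 < θ) : EdgeLengthsGE (homothety z θ '' F) (θ * lb) := by
  rintro _ _ ⟨hvw, hedge⟩
  obtain ⟨v, -, rfl⟩ := hedge.1 (left_mem_segment ℝ _ _)
  obtain ⟨w, -, rfl⟩ := hedge.1 (right_mem_segment ℝ _ _)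
  rw [← image_segment, isExtreme_homothety_image_iff hθ.ne'] at hedge
  exact (h v w ⟨fun h => hvw (congrArg _ h), hedge⟩).homothety z hθ

theorem exists_eq_of_mem_layer_smul_convexHull_insert {F : Set (Pt d)} (hF : Convex ℝ F)
    (hFne : F.Nonempty) {w : Pt d} (hw : w ∉ affineSpan ℝ F) {c μ : ℝ} (hc : 0 < c) {y : Pt d}
    (hy : y ∈ layer (c • convexHull ℝ (insert w F)) (c • F)
      (μ * infDist w (affineSpan ℝ F : Set (Pt d)))) :
    ∃ f ∈ F, ∃ s, 0 ≤ s ∧ s ≤ μ ∧ y = c • f + s • (w - f) := by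
  obtain ⟨⟨z, hz, rfl⟩, hdist⟩ := hy
  rw [convexHull_insert hFne, hF.convexHull_eq] at hz
  obtain ⟨_, hx, f, hf, hz⟩ := mem_convexJoin.1 hz
  rw [mem_singleton_iff.1 hx, segment_symm, segment_eq_image_lineMap] at hz
  obtain ⟨a, ⟨ha0, -⟩, rfl⟩ := hz
  have hpos : 0 < infDist w (affineSpan ℝ F : Set (Pt d)) :=
    (AffineSubspace.closed_of_finiteDimensional _).notMem_iff_infDist_pos
      ((affineSpan_nonempty ℝ).2 hFne) |>.1 hw
  rw [← AffineSubspace.smul_span, AffineSubspace.coe_smul, infDist_smul₀ hc.ne',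
    infDist_lineMap_of_mem (subset_affineSpan ℝ F hf) w ha0, Real.norm_of_nonneg hc.le,
    ← mul_assoc] at hdist
  refine ⟨f, hf, c * a, by positivity, le_of_mul_le_mul_right hdist hpos, ?_⟩
  simp only [lineMap_apply_module']
  module

theorem smul_add_smul_sub_mem_cnUnion {P F : Set (Pt d)} (hP : Convex ℝ P)
    (hPF : IsExtreme ℝ P F) {w : Pt d} (hw : w ∈ P) {θ c c' : ℝ} (hθ : 0 < θ)
    (hcc' : θ * (c' - 1) = c - 1)
    (hcover : c' • (homothety w θ '' F) ⊆ cnUnion (homothety w θ '' F) c')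
    {f : Pt d} (hf : f ∈ F) {s : ℝ} (hs0 : 0 ≤ s) (hs1 : s ≤ 1 - θ) :
    c • f + s • (w - f) ∈ cnUnion P c := by
  obtain ⟨v', hv', _, ⟨_, ⟨fq, hfq, rfl⟩, rfl⟩, hlat, _, ⟨fp, hfp, rfl⟩, hsum⟩ :=
    hcover (smul_mem_smul_set (mem_image_of_mem _ hf))
  rw [← homothety_image_extremePoints w hθ.ne'] at hv'
  obtain ⟨f₀, hf₀, rfl⟩ := hv'
  simp only [homothety_eq_lineMap, lineMap_apply_module'] at hlat hsum
  refine ⟨f₀, hPF.extremePoints_subset_extremePoints hf₀, (c - 1) • fq,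
    smul_mem_smul_set (hPF.1 hfq), ?_, s • w + (1 - θ - s) • f + θ • fp, ?_, ?_⟩
  · convert hlat using 1
    linear_combination (norm := module) -hcc' • (fq - f₀)
  · have := hP.sum_mem (t := Finset.univ) (w := ![s, 1 - θ - s, θ]) (z := ![w, f, fp])
      (by simp [Fin.forall_fin_succ, hs0, hθ.le, hs1]) (by simp [Fin.sum_univ_three])
      (by simp [Fin.forall_fin_succ, hw, hPF.1 hf, hPF.1 hfp])
    simpa [Fin.sum_univ_three] using this
  · linear_combination (norm := module) hsum - hcc' • f + hcc' • fq

end Polytope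

theorem statement7_general (d : ℕ) (hd : 2 ≤ d) (k : ℚ) (lam : ℚ)
    (hyp : ∀ Q : Set (Pt d), IsRationalPolytope Q → polyDim Q = d - 1 →
      EdgeLengthsGE Q (((d : ℝ) / ((d : ℝ) + 1)) * (lam : ℝ)) →
      ∀ c : ℚ, 2 ≤ c → c ≤ k + (k - 1) / (d : ℚ) → (c : ℝ) • Q = cnUnion Q (c : ℝ))
    (P : Set (Pt d)) (hP : IsRationalPolytope P) (hdim : polyDim P = d)
    (hedges : EdgeLengthsGE P (lam : ℝ))
    (w : Pt d) (hw : w ∈ Set.extremePoints ℝ P)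
    (F : Set (Pt d)) (hF : IsFacetOf P F) (hwF : w ∉ F)
    (Δ : Set (Pt d)) (hΔ : Δ = convexHull ℝ (insert w F))
    (ε : ℝ)
    (hε : ε = infDist w ((affineSpan ℝ F : AffineSubspace ℝ (Pt d)) : Set (Pt d)) / ((d : ℝ) + 1))
    (c : ℚ) (hc1 : 2 ≤ c) (hc2 : c ≤ k) :
    layer ((c : ℝ) • Δ) ((c : ℝ) • F) ε ⊆ cnUnion P (c : ℝ) := by
  obtain ⟨hface, hdimF⟩ := hF
  have hFne : F.Nonempty := by
    by_contra! h
    rw [h, polyDim, vectorSpan_empty, finrank_bot] at hdimF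
    omega
  set θ : ℚ := d / (d + 1)
  have hθ : (0 : ℝ) < θ := by push_cast [θ]; positivity
  have hθ' : ((d : ℝ) + 1)⁻¹ = 1 - θ := by push_cast [θ]; field_simp; ring
  set c' : ℚ := c + (c - 1) / d
  have hcc' : (θ : ℝ) * (c' - 1) = c - 1 := by push_cast [θ, c']; field_simp; ring
  have hc'2 : 2 ≤ c' := le_add_of_le_of_nonneg hc1 (div_nonneg (by linarith) (by positivity))
  have hc'k : c' ≤ k + (k - 1) / d := by simp only [c']; gcongr
  have hcover := hyp (homothety w (θ : ℝ) '' F)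
    ((hP.of_isFaceOf hface).image_homothety (hP.isRatPt_of_mem_extremePoints hw) θ)
    (by rw [polyDim_homothety_image w hθ.ne']; omega)
    (by simpa [θ] using (hedges.of_isExtreme hface.1).image_homothety w hθ) c' hc'2 hc'k
  have hwF' : w ∉ affineSpan ℝ F := fun h => hwF (hface.1.mem_of_mem_affineSpan hface.2.1 hw.1 h)
  intro y hy
  rw [hΔ, hε, div_eq_inv_mul, hθ'] at hy
  obtain ⟨f, hf, s, hs0, hs1, rfl⟩ :=
    exists_eq_of_mem_layer_smul_convexHull_insert hface.2.1 hFne hwF' (by positivity) hy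
  exact smul_add_smul_sub_mem_cnUnion hP.convex hface.1 hw.1 hθ hcc' hcover.subset hf hs0 hs1

/-- Lemma 3.2. The pyramid lemma: assuming `CN(d-1, k + (k-1)/d)` for
rational `(d-1)`-polytopes with edges of lattice length `≥ (d/(d+1))λ`, the `ε`-layer of
`cΔ` along `cF` is covered by the translates `x + P`, where `Δ = conv(w, F)` and
`ε = dist(w, aff F)/(d+1)`. -/
theorem statement7 (d : ℕ) (hd : 2 ≤ d) (k : ℚ) (hk : 2 ≤ k) (lam : ℚ) (hlam : 0 < lam)
    (hyp : ∀ Q : Set (Pt d), IsRationalPolytope Q → polyDim Q = d - 1 →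
      EdgeLengthsGE Q (((d : ℝ) / ((d : ℝ) + 1)) * (lam : ℝ)) →
      ∀ c : ℚ, 2 ≤ c → c ≤ k + (k - 1) / (d : ℚ) → (c : ℝ) • Q = cnUnion Q (c : ℝ))
    (P : Set (Pt d)) (hP : IsRationalPolytope P) (hdim : polyDim P = d)
    (hedges : EdgeLengthsGE P (lam : ℝ))
    (w : Pt d) (hw : w ∈ Set.extremePoints ℝ P)
    (F : Set (Pt d)) (hF : IsFacetOf P F) (hwF : w ∉ F)
    (Δ : Set (Pt d)) (hΔ : Δ = convexHull ℝ (insert w F))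
    (ε : ℝ)
    (hε : ε = infDist w ((affineSpan ℝ F : AffineSubspace ℝ (Pt d)) : Set (Pt d)) / ((d : ℝ) + 1))
    (c : ℚ) (hc1 : 2 ≤ c) (hc2 : c ≤ k) :
    layer ((c : ℝ) • Δ) ((c : ℝ) • F) ε ⊆ cnUnion P (c : ℝ) :=
  statement7_general d hd k lam hyp P hP hdim hedges w hw F hF hwF Δ hΔ ε hε c hc1 hc2
end
end

section
/- Let d be a positive integer and let Δ_d = conv{0, e₁, …, e_d} ⊂ ℝ^d be the standard unimodular simplex, where e₁,…,e_d are the standard basis vectors. If H ⊂ ℝ^d is an affine hyperplane that does not intersect the interior of Δ_d, then max over the vertices v ∈ {0, e₁, …, e_d} of dist(v, H) is at least 1/√d. -/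
open Set Metric Pointwise

noncomputable section

/-! Since `H` misses the interior of the convex body `Δ_d`, which is nonempty, all vertices of
`Δ_d` lie in one closed half-space of `H`; up to replacing `(a, b)` by `(-a, -b)`, `⟪a, v⟫ ≥ b`
at every vertex `v`, i.e. `b ≤ 0` and `b ≤ a i` for all `i`. For `i` with `|a i|` maximal,
`‖a‖ ≤ √d |a i|`, and the vertex `e_i` (if `a i ≥ 0`) or `0` (if `a i < 0`) satisfies
`⟪a, v⟫ - b ≥ |a i| ≥ ‖a‖ / √d`, so its distance `|⟪a, v⟫ - b| / ‖a‖` to `H` is at least `1 / √d`.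
-/

open scoped RealInnerProductSpace

theorem Convex.forall_le_or_forall_ge_of_forall_interior_ne {E : Type*} [NormedAddCommGroup E]
    [NormedSpace ℝ E] {s : Set E} (hs : Convex ℝ s) (hint : (interior s).Nonempty) {f : E → ℝ}
    (hf : Continuous f) {c : ℝ} (hne : ∀ x ∈ interior s, f x ≠ c) :
    (∀ x ∈ s, f x ≤ c) ∨ ∀ x ∈ s, c ≤ f x := by
  have hsub : s ⊆ closure (interior s) := by
    rw [hs.closure_interior_eq_closure_of_nonempty_interior hint]
    exact subset_closure
  rcases hs.interior.isPreconnected.subset_or_subset (isOpen_lt hf continuous_const)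
      (isOpen_lt continuous_const hf) (disjoint_left.2 fun x (h₁ : f x < c) h₂ => lt_asymm h₁ h₂)
      (fun x hx => (hne x hx).lt_or_gt) with h | h
  · exact .inl fun x hx => closure_lt_subset_le hf continuous_const (closure_mono h (hsub hx))
  · exact .inr fun x hx => closure_lt_subset_le continuous_const hf (closure_mono h (hsub hx))

theorem abs_inner_sub_div_norm_le_infDist {E : Type*} [NormedAddCommGroup E]
    [InnerProductSpace ℝ E] (a v : E) (b : ℝ) :
    |⟪a, v⟫ - b| / ‖a‖ ≤ infDist v {x | ⟪a, x⟫ = b} := by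
  rcases eq_or_ne a 0 with rfl | ha
  · simpa using infDist_nonneg
  have hna : 0 < ‖a‖ := norm_pos_iff.2 ha
  have hH : {x | ⟪a, x⟫ = b}.Nonempty :=
    ⟨(b / ‖a‖ ^ 2) • a, by simp [real_inner_smul_right, hna.ne']⟩
  refine (le_infDist hH).2 fun y (hy : ⟪a, y⟫ = b) => ?_
  rw [div_le_iff₀ hna, dist_eq_norm, ← hy, ← inner_sub_right, mul_comm]
  exact abs_real_inner_le_norm a (v - y)

theorem EuclideanSpace.exists_norm_le_sqrt_card_mul_abs {ι : Type*} [Fintype ι] [Nonempty ι]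
    (a : EuclideanSpace ℝ ι) :
    ∃ i, ‖a‖ ≤ √(Fintype.card ι) * |a i| := by
  obtain ⟨i, hi⟩ := exists_eq_ciSup_of_finite (f := fun j => ‖⟪basisFun ι ℝ j, a⟫‖)
  refine ⟨i, ?_⟩
  have := (basisFun ι ℝ).norm_le_card_mul_iSup_norm_inner a
  rw [← hi] at this
  classical
  simpa [EuclideanSpace.inner_single_left] using this

def simplexVertices (ι : Type*) [DecidableEq ι] : Set (EuclideanSpace ℝ ι) :=
  insert 0 (range fun i => EuclideanSpace.single i 1)

variable {ι : Type*} [Fintype ι] [DecidableEq ι]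

theorem interior_convexHull_simplexVertices_nonempty :
    (interior (convexHull ℝ (simplexVertices ι))).Nonempty := by
  rw [interior_convexHull_nonempty_iff_affineSpan_eq_top, ← AffineSubspace.coe_eq_univ_iff,
    simplexVertices, affineSpan_insert_zero]
  simp_rw [← EuclideanSpace.basisFun_apply ι ℝ]
  rw [← (EuclideanSpace.basisFun ι ℝ).coe_toBasis, (EuclideanSpace.basisFun ι ℝ).toBasis.span_eq]
  rfl

theorem exists_mem_simplexVertices_norm_div_le_inner_sub [Nonempty ι] {a : EuclideanSpace ℝ ι}
    {b : ℝ} (h : ∀ v ∈ simplexVertices ι, b ≤ ⟪a, v⟫) :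
    ∃ v ∈ simplexVertices ι, ‖a‖ / √(Fintype.card ι) ≤ ⟪a, v⟫ - b := by
  have hsingle i : ⟪a, EuclideanSpace.single i 1⟫ = a i := by
    simp [EuclideanSpace.inner_single_right]
  have hb₀ : b ≤ 0 := by simpa using h 0 (mem_insert _ _)
  obtain ⟨i, hi⟩ := EuclideanSpace.exists_norm_le_sqrt_card_mul_abs a
  have hbi : b ≤ a i := hsingle i ▸ h _ (mem_insert_of_mem _ ⟨i, rfl⟩)
  have hai : ‖a‖ / √(Fintype.card ι) ≤ |a i| := by
    rw [div_le_iff₀ (by positivity)]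
    linarith
  rcases le_or_gt 0 (a i) with hpos | hneg
  · refine ⟨_, mem_insert_of_mem _ ⟨i, rfl⟩, ?_⟩
    rw [hsingle]
    rw [abs_of_nonneg hpos] at hai
    linarith
  · refine ⟨0, mem_insert _ _, ?_⟩
    rw [abs_of_neg hneg] at hai
    rw [inner_zero_right]
    linarith

theorem exists_mem_simplexVertices_norm_div_le_abs_inner_sub [Nonempty ι]
    {a : EuclideanSpace ℝ ι} {b : ℝ}
    (h : (∀ v ∈ simplexVertices ι, ⟪a, v⟫ ≤ b) ∨ ∀ v ∈ simplexVertices ι, b ≤ ⟪a, v⟫) :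
    ∃ v ∈ simplexVertices ι, ‖a‖ / √(Fintype.card ι) ≤ |⟪a, v⟫ - b| := by
  rcases h with h | h
  · obtain ⟨v, hv, hle⟩ := exists_mem_simplexVertices_norm_div_le_inner_sub (a := -a) (b := -b)
      fun v hv => by simpa [inner_neg_left] using h v hv
    rw [inner_neg_left, norm_neg, neg_sub_neg, ← neg_sub] at hle
    exact ⟨v, hv, hle.trans (neg_le_abs _)⟩
  · obtain ⟨v, hv, hle⟩ := exists_mem_simplexVertices_norm_div_le_inner_sub h
    exact ⟨v, hv, hle.trans (le_abs_self _)⟩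

/-- Lemma 4.1. If an affine hyperplane `H ⊂ ℝ^d` does not meet the interior
of the standard unimodular simplex `Δ_d = conv{0, e₁, …, e_d}`, then some vertex of `Δ_d` is at
Euclidean distance at least `1/√d` from `H`. -/
theorem statement9 (d : ℕ) (hd : 0 < d) (a : Pt d) (b : ℝ) (ha : a ≠ 0)
    (H : Set (Pt d)) (hH : H = {x | (inner ℝ a x : ℝ) = b})
    (hdisj : H ∩ interior (convexHull ℝ
      (insert (0 : Pt d) (Set.range fun i => EuclideanSpace.single i (1 : ℝ)))) = ∅) :
    ∃ v ∈ insert (0 : Pt d) (Set.range fun i => EuclideanSpace.single i (1 : ℝ)),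
      1 / Real.sqrt d ≤ infDist v H := by
  subst hH
  have : Nonempty (Fin d) := ⟨⟨0, hd⟩⟩
  have hside := Convex.forall_le_or_forall_ge_of_forall_interior_ne
    (convex_convexHull ℝ (simplexVertices (Fin d))) interior_convexHull_simplexVertices_nonempty
    (continuous_const.inner continuous_id) fun x hx hxH => hdisj.subset ⟨hxH, hx⟩
  obtain ⟨v, hv, hle⟩ := exists_mem_simplexVertices_norm_div_le_abs_inner_sub <| hside.imp
    (fun h v hv => h v (subset_convexHull ℝ _ hv)) fun h v hv => h v (subset_convexHull ℝ _ hv)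
  refine ⟨v, hv, le_trans ?_ (abs_inner_sub_div_norm_le_infDist a v b)⟩
  rw [Fintype.card_fin] at hle
  calc 1 / √d = ‖a‖ / √d / ‖a‖ := by field_simp [norm_ne_zero_iff.2 ha]
    _ ≤ |⟪a, v⟫ - b| / ‖a‖ := by gcongr
end
end

section
/- Let d be a positive integer, l ∈ ℚ with l ≥ 1, and let P ⊂ ℝ^d be a rational polytope of dimension d all of whose edges have lattice length at least l·d·(d+1). Let v be a vertex of P and let v₁,…,v_d be vertices of P such that each segment [v, v_i] is an edge of P and the vectors v₁−v,…,v_d−v are linearly independent. Set ε_F = width_F(P)/(l(d+1)) for each facet F of P. Then P(v, ε̄) ∩ (v + C) ⊆ P(v, C), where C is the simplicial cone spanned by v₁−v,…,v_d−v. -/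
open Set Metric Pointwise

noncomputable section

/-!
Write a point of `v + C` as `y = v + ∑ ξᵢ xᵢ` with `ξ ≥ 0`; it lies in the parallelepiped based at
`v + ∑ ⌊ξᵢ⌋ xᵢ`, and every point `p` of that parallelepiped is `v + ∑ κᵢ xᵢ` with `κ ≥ 0` and
`|κᵢ - ξᵢ| ≤ 1`. If `p ∉ P`, some facet inequality `⟪w, ·⟫ ≤ c` of `P` fails at `p`. If the facet
contains `v`, this is impossible since every `xᵢ` points from `v` into `P`. Otherwise `y ∈ P(v, ε̄)`
is at distance at least `ε_F = width_F(P) / (l(d+1))` from the facet, while one step along `xᵢ`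
moves the distance by at most `width_F(P) / (l d (d+1))`: the edge `[v, vᵢ]` is `tᵢ xᵢ` with
`tᵢ ≥ l d (d+1)`, and both of its ends are within `width_F(P)` of the facet. The `d` steps from `y`
to `p` therefore cannot cross the facet.
-/

open RealInnerProductSpace

lemma Finset.exists_tilt {α : Type*} (V : Finset α) (f g : α → ℝ) {c b : ℝ}
    (hle : ∀ z ∈ V, f z ≤ c) (hfg : ∀ z ∈ V, f z = c → g z = b) (hpos : ∃ z ∈ V, b < g z) :
    ∃ θ > 0, ∃ z₀ ∈ V, b < g z₀ ∧ f z₀ + θ * g z₀ = c + θ * b ∧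
      ∀ z ∈ V, f z + θ * g z ≤ c + θ * b := by
  classical
  obtain ⟨z₀, hz₀, hmin⟩ := (V.filter (b < g ·)).exists_min_image
    (fun z => (c - f z) / (g z - b)) (by simpa [Finset.Nonempty] using hpos)
  rw [Finset.mem_filter] at hz₀
  have hgz₀ : 0 < g z₀ - b := sub_pos.2 hz₀.2
  have hfz₀ : f z₀ < c := (hle z₀ hz₀.1).lt_of_ne fun h => (hfg z₀ hz₀.1 h ▸ hz₀.2).false
  refine ⟨(c - f z₀) / (g z₀ - b), div_pos (sub_pos.2 hfz₀) hgz₀, z₀, hz₀.1, hz₀.2, ?_,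
    fun z hz => ?_⟩
  · field_simp
    ring
  rcases le_or_gt (g z) b with hgz | hgz
  · nlinarith [hle z hz, div_pos (sub_pos.2 hfz₀) hgz₀]
  · have := (le_div_iff₀ (sub_pos.2 hgz)).1 (hmin z (Finset.mem_filter.2 ⟨hz, hgz⟩))
    linarith

section Hyperplanes

variable {E : Type*} [NormedAddCommGroup E] [InnerProductSpace ℝ E]

lemma infDist_setOf_inner_eq {w : E} (hw : ‖w‖ = 1) (c : ℝ) (z : E) :
    infDist z {x | ⟪w, x⟫ = c} = |⟪w, z⟫ - c| := by
  have hfoot : z - (⟪w, z⟫ - c) • w ∈ {x | ⟪w, x⟫ = c} := by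
    simp only [mem_ofPred_eq, inner_sub_right, real_inner_smul_right,
      real_inner_self_eq_norm_sq, hw]
    ring
  refine le_antisymm ?_ ((le_infDist ⟨_, hfoot⟩).2 fun y (hy : ⟪w, y⟫ = c) => ?_)
  · calc infDist z _ ≤ dist z (z - (⟪w, z⟫ - c) • w) := infDist_le_dist_of_mem hfoot
      _ = |⟪w, z⟫ - c| := by simp [norm_smul, hw]
  · calc |⟪w, z⟫ - c| = |⟪w, z - y⟫| := by rw [inner_sub_right, hy]
      _ ≤ ‖w‖ * ‖z - y‖ := abs_real_inner_le_norm w (z - y)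
      _ = dist z y := by rw [hw, one_mul, dist_eq_norm]

lemma isExtreme_inter_setOf_inner_eq {A : Set E} {w : E} {c : ℝ}
    (hA : ∀ z ∈ A, ⟪w, z⟫ ≤ c) : IsExtreme ℝ A (A ∩ {z | ⟪w, z⟫ = c}) := by
  refine IsExposed.isExtreme fun ⟨b, hbA, hb⟩ => ⟨innerSL ℝ w, ?_⟩
  ext z
  simp only [mem_inter_iff, mem_ofPred_eq, innerSL_apply_apply]
  refine ⟨fun ⟨hz, hzc⟩ => ⟨hz, fun y hy => hzc ▸ hA y hy⟩,
    fun ⟨hz, hmax⟩ => ⟨hz, le_antisymm (hA z hz) (hb ▸ hmax b hbA)⟩⟩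

lemma finrank_orthogonal_span_singleton_of_ne_zero [FiniteDimensional ℝ E] {w : E}
    (hw : w ≠ 0) : Module.finrank ℝ (ℝ ∙ w)ᗮ = Module.finrank ℝ E - 1 := by
  have := (ℝ ∙ w).finrank_add_finrank_orthogonal
  rw [finrank_span_singleton hw] at this
  omega

lemma vectorSpan_eq_orthogonal_of_subset_setOf_inner_eq [FiniteDimensional ℝ E] {S : Set E}
    {w : E} {c : ℝ} (hw : w ≠ 0) (hS : S ⊆ {z | ⟪w, z⟫ = c})
    (hrank : Module.finrank ℝ E - 1 ≤ Module.finrank ℝ (vectorSpan ℝ S)) :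
    vectorSpan ℝ S = (ℝ ∙ w)ᗮ := by
  have hle : vectorSpan ℝ S ≤ (ℝ ∙ w)ᗮ := by
    rw [vectorSpan_def, Submodule.span_le]
    rintro _ ⟨z₁, hz₁, z₂, hz₂, rfl⟩
    change z₁ - z₂ ∈ (ℝ ∙ w)ᗮ
    rw [Submodule.mem_orthogonal_singleton_iff_inner_right,
      inner_sub_right, hS hz₁, hS hz₂, sub_self]
  exact Submodule.eq_of_le_of_finrank_le hle
    (finrank_orthogonal_span_singleton_of_ne_zero hw ▸ hrank)

lemma coe_affineSpan_eq_setOf_inner_eq [FiniteDimensional ℝ E] {S : Set E} {w : E} {c : ℝ}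
    (hw : w ≠ 0) (hS : S ⊆ {z | ⟪w, z⟫ = c}) {s₀ : E} (hs₀ : s₀ ∈ S)
    (hrank : Module.finrank ℝ E - 1 ≤ Module.finrank ℝ (vectorSpan ℝ S)) :
    (affineSpan ℝ S : Set E) = {z | ⟪w, z⟫ = c} := by
  ext z
  rw [SetLike.mem_coe, ← AffineSubspace.vsub_right_mem_direction_iff_mem
    (subset_affineSpan ℝ S hs₀), direction_affineSpan,
    vectorSpan_eq_orthogonal_of_subset_setOf_inner_eq hw hS hrank,
    Submodule.mem_orthogonal_singleton_iff_inner_right, vsub_eq_sub, inner_sub_right, hS hs₀,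
    mem_ofPred_eq, sub_eq_zero]

lemma exists_inner_sub_pos_of_finrank_lt [FiniteDimensional ℝ E] {V : Set E} {s₀ : E}
    (hs₀ : s₀ ∈ V)
    {W : Submodule ℝ E} (hW : Module.finrank ℝ W < Module.finrank ℝ (vectorSpan ℝ V)) :
    ∃ u ∈ Wᗮ, ∃ z ∈ V, 0 < ⟪u, z - s₀⟫ := by
  by_contra! h
  refine (Submodule.finrank_mono ?_).not_gt hW
  rw [vectorSpan_eq_span_vsub_set_right ℝ hs₀, Submodule.span_le]
  rintro _ ⟨z, hz, rfl⟩
  rw [SetLike.mem_coe, ← W.orthogonal_orthogonal, Submodule.mem_orthogonal]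
  intro u hu
  have := h (-u) (Wᗮ.neg_mem hu) z hz
  rw [inner_neg_left] at this
  show ⟪u, z - s₀⟫ = 0
  exact le_antisymm (h u hu z hz) (by linarith)

def IsSeparatingSupport (V : Set E) (p w : E) (c : ℝ) : Prop :=
  (∀ z ∈ V, ⟪w, z⟫ ≤ c) ∧ (∃ z ∈ V, ⟪w, z⟫ = c) ∧ c < ⟪w, p⟫

lemma IsSeparatingSupport.ne_zero {V : Set E} {p w : E} {c : ℝ}
    (h : IsSeparatingSupport V p w c) : w ≠ 0 := by
  rintro rfl
  obtain ⟨-, ⟨z, -, hz⟩, hp⟩ := h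
  simp only [inner_zero_left] at hz hp
  exact hp.ne hz.symm

lemma IsSeparatingSupport.smul {V : Set E} {p w : E} {c r : ℝ}
    (h : IsSeparatingSupport V p w c) (hr : 0 < r) : IsSeparatingSupport V p (r • w) (r * c) := by
  obtain ⟨hle, ⟨z, hz, hzc⟩, hp⟩ := h
  simp only [IsSeparatingSupport, real_inner_smul_left]
  exact ⟨fun y hy => mul_le_mul_of_nonneg_left (hle y hy) hr.le, ⟨z, hz, hzc ▸ rfl⟩,
    mul_lt_mul_of_pos_left hp hr⟩

/-- Tilt the hyperplane by a direction `u` orthogonal to the contact set and to `p`, until it meets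
a further vertex of `V`; that vertex lies outside the affine span of the old contact set. -/
lemma IsSeparatingSupport.exists_finrank_succ_le [FiniteDimensional ℝ E] {V : Finset E}
    {p w : E} {c : ℝ}
    (h : IsSeparatingSupport ↑V p w c)
    (hV : Module.finrank ℝ (vectorSpan ℝ (V : Set E)) = Module.finrank ℝ E)
    (hk : Module.finrank ℝ (vectorSpan ℝ (↑V ∩ {z | ⟪w, z⟫ = c})) + 2 ≤ Module.finrank ℝ E) :
    ∃ w' c', IsSeparatingSupport ↑V p w' c' ∧
      Module.finrank ℝ (vectorSpan ℝ (↑V ∩ {z | ⟪w, z⟫ = c})) + 1 ≤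
        Module.finrank ℝ (vectorSpan ℝ (↑V ∩ {z | ⟪w', z⟫ = c'})) := by
  obtain ⟨hle, ⟨s₀, hs₀V, hs₀c⟩, hgap⟩ := h
  set S : Set E := ↑V ∩ {z | ⟪w, z⟫ = c}
  have hs₀ : s₀ ∈ S := ⟨hs₀V, hs₀c⟩
  have hW : Module.finrank ℝ ↥(vectorSpan ℝ S ⊔ ℝ ∙ (p - s₀)) <
      Module.finrank ℝ (vectorSpan ℝ (V : Set E)) := by
    have := Submodule.finrank_add_le_finrank_add_finrank (vectorSpan ℝ S) (ℝ ∙ (p - s₀))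
    have : Module.finrank ℝ (ℝ ∙ (p - s₀)) ≤ 1 := by
      simpa using finrank_span_le_card (R := ℝ) {p - s₀}
    omega
  obtain ⟨u, hu, z₁, hz₁, hz₁pos⟩ := exists_inner_sub_pos_of_finrank_lt hs₀V hW
  have hu_S : ∀ y ∈ vectorSpan ℝ S, ⟪u, y⟫ = 0 := fun y hy =>
    (Submodule.mem_orthogonal' _ u).1 hu y (Submodule.mem_sup_left hy)
  have huS : ∀ z ∈ S, ⟪u, z⟫ = ⟪u, s₀⟫ := fun z hz => by
    have := hu_S _ (vsub_mem_vectorSpan ℝ hz hs₀)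
    rwa [vsub_eq_sub, inner_sub_right, sub_eq_zero] at this
  have hup : ⟪u, p⟫ = ⟪u, s₀⟫ := by
    have := (Submodule.mem_orthogonal' _ u).1 hu _
      (Submodule.mem_sup_right (Submodule.mem_span_singleton_self (p - s₀)))
    rwa [inner_sub_right, sub_eq_zero] at this
  rw [inner_sub_right, sub_pos] at hz₁pos
  obtain ⟨θ, hθ, z₀, hz₀V, hz₀u, hz₀c, hle'⟩ := V.exists_tilt (⟪w, ·⟫) (⟪u, ·⟫) hle
    (fun z hz hzc => huS z ⟨hz, hzc⟩) ⟨z₁, hz₁, hz₁pos⟩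
  have htilt : ∀ z, ⟪w + θ • u, z⟫ = ⟪w, z⟫ + θ * ⟪u, z⟫ := fun z => by
    rw [inner_add_left, real_inner_smul_left]
  refine ⟨w + θ • u, c + θ * ⟪u, s₀⟫, ⟨fun z hz => htilt z ▸ hle' z hz,
    ⟨z₀, hz₀V, htilt z₀ ▸ hz₀c⟩, by rw [htilt, hup]; linarith⟩, ?_⟩
  have hSS' : S ⊆ ↑V ∩ {z | ⟪w + θ • u, z⟫ = c + θ * ⟪u, s₀⟫} := fun z hz =>
    ⟨hz.1, by rw [mem_ofPred_eq, htilt, hz.2, huS z hz]⟩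
  have hz₀ : z₀ ∈ ↑V ∩ {z | ⟪w + θ • u, z⟫ = c + θ * ⟪u, s₀⟫} :=
    ⟨hz₀V, by rw [mem_ofPred_eq, htilt, hz₀c]⟩
  have hz₀S : z₀ -ᵥ s₀ ∉ vectorSpan ℝ S := fun hmem => by
    have := hu_S _ hmem
    rw [vsub_eq_sub, inner_sub_right] at this
    linarith
  refine Submodule.finrank_lt_finrank_of_lt ((vectorSpan_mono ℝ hSS').lt_of_ne fun heq => ?_)
  exact hz₀S (heq ▸ vsub_mem_vectorSpan ℝ hz₀ (hSS' hs₀))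

lemma exists_isSeparatingSupport_finrank_ge [FiniteDimensional ℝ E] {V : Finset E}
    (hne : V.Nonempty)
    (hV : Module.finrank ℝ (vectorSpan ℝ (V : Set E)) = Module.finrank ℝ E) {p : E}
    (hp : p ∉ convexHull ℝ (V : Set E)) :
    ∃ w c, ‖w‖ = 1 ∧ IsSeparatingSupport ↑V p w c ∧
      Module.finrank ℝ E - 1 ≤ Module.finrank ℝ (vectorSpan ℝ (↑V ∩ {z | ⟪w, z⟫ = c})) := by
  have hsep : ∃ w c, IsSeparatingSupport ↑V p w c := by
    obtain ⟨f, r, hfr, hrp⟩ := geometric_hahn_banach_closed_point (convex_convexHull ℝ _)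
      (V.finite_toSet.isCompact_convexHull ℝ).isClosed hp
    set w := (InnerProductSpace.toDual ℝ E).symm f
    obtain ⟨z₀, hz₀, hmax⟩ := V.exists_max_image (⟪w, ·⟫) hne
    refine ⟨w, ⟪w, z₀⟫, hmax, ⟨z₀, hz₀, rfl⟩, ?_⟩
    simp only [w, InnerProductSpace.toDual_symm_apply]
    exact (hfr _ (subset_convexHull ℝ _ hz₀)).trans hrp
  have hrank : ∀ k, ∃ w c, IsSeparatingSupport ↑V p w c ∧
      min (Module.finrank ℝ E - 1) k ≤
        Module.finrank ℝ (vectorSpan ℝ (↑V ∩ {z | ⟪w, z⟫ = c})) := by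
    intro k
    induction k with
    | zero => simpa using hsep
    | succ k ih =>
      obtain ⟨w, c, h, hk⟩ := ih
      by_cases hbig : min (Module.finrank ℝ E - 1) (k + 1) ≤
          Module.finrank ℝ (vectorSpan ℝ (↑V ∩ {z | ⟪w, z⟫ = c}))
      · exact ⟨w, c, h, hbig⟩
      · obtain ⟨w', c', h', hk'⟩ := h.exists_finrank_succ_le hV (by omega)
        exact ⟨w', c', h', by omega⟩
  obtain ⟨w, c, h, hk⟩ := hrank (Module.finrank ℝ E - 1)
  rw [min_self] at hk
  have hw : 0 < ‖w‖ := norm_pos_iff.2 h.ne_zero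
  have hcontact : {z | ⟪‖w‖⁻¹ • w, z⟫ = ‖w‖⁻¹ * c} = {z | ⟪w, z⟫ = c} := by
    ext z
    simp [real_inner_smul_left, hw.ne']
  refine ⟨‖w‖⁻¹ • w, ‖w‖⁻¹ * c, ?_, h.smul (inv_pos.2 hw), hcontact ▸ hk⟩
  rw [norm_smul, norm_inv, norm_norm, inv_mul_cancel₀ hw.ne']

lemma inner_sum_smul_le_add {ι : Type*} [Fintype ι] (w : E) (x : ι → E) {κ ξ : ι → ℝ} {δ : ℝ}
    (hκξ : ∀ i, |κ i - ξ i| ≤ 1) (hx : ∀ i, |⟪w, x i⟫| ≤ δ) :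
    ⟪w, ∑ i, κ i • x i⟫ ≤ ⟪w, ∑ i, ξ i • x i⟫ + Fintype.card ι * δ := by
  simp only [inner_sum, real_inner_smul_right]
  rw [← sub_le_iff_le_add', ← Finset.sum_sub_distrib]
  calc ∑ i, (κ i * ⟪w, x i⟫ - ξ i * ⟪w, x i⟫) ≤ ∑ _i : ι, δ := by
        refine Finset.sum_le_sum fun i _ => ?_
        rw [← sub_mul]
        calc (κ i - ξ i) * ⟪w, x i⟫ ≤ |κ i - ξ i| * |⟪w, x i⟫| :=
              (abs_mul (κ i - ξ i) ⟪w, x i⟫).symm ▸ le_abs_self _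
          _ ≤ δ := (mul_le_of_le_one_left (abs_nonneg ⟪w, x i⟫) (hκξ i)).trans (hx i)
    _ = Fintype.card ι * δ := by simp

lemma inner_add_sum_smul_le_of_inner_eq {ι : Type*} [Fintype ι] {w v : E} {c : ℝ}
    (hv : ⟪w, v⟫ = c) {vv x : ι → E} {t : ι → ℝ} (ht : ∀ i, 0 < t i)
    (hvx : ∀ i, vv i - v = t i • x i) (hvv : ∀ i, ⟪w, vv i⟫ ≤ c) {κ : ι → ℝ}
    (hκ : ∀ i, 0 ≤ κ i) : ⟪w, v + ∑ i, κ i • x i⟫ ≤ c := by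
  have hx : ∀ i, ⟪w, x i⟫ ≤ 0 := fun i => by
    refine nonpos_of_mul_nonpos_right ?_ (ht i)
    rw [← real_inner_smul_right, ← hvx, inner_sub_right]
    linarith [hvv i]
  have : ⟪w, ∑ i, κ i • x i⟫ ≤ 0 := by
    simp only [inner_sum, real_inner_smul_right]
    exact Finset.sum_nonpos fun i _ => mul_nonpos_of_nonneg_of_nonpos (hκ i) (hx i)
  rw [inner_add_right]
  linarith

lemma inner_add_sum_smul_le_of_le_sub {ι : Type*} [Fintype ι] {w v : E} {c W s : ℝ}
    (hs : 0 < s) (hv : ⟪w, v⟫ ≤ c) (hvW : c - ⟪w, v⟫ ≤ W) {vv x : ι → E} {t : ι → ℝ}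
    (hvv : ∀ i, ⟪w, vv i⟫ ≤ c) (hvvW : ∀ i, c - ⟪w, vv i⟫ ≤ W)
    (ht : ∀ i, Fintype.card ι * s ≤ t i) (hvx : ∀ i, vv i - v = t i • x i) {ξ κ : ι → ℝ}
    (hy : W / s ≤ c - ⟪w, v + ∑ i, ξ i • x i⟫) (hκξ : ∀ i, |κ i - ξ i| ≤ 1) :
    ⟪w, v + ∑ i, κ i • x i⟫ ≤ c := by
  have hm : ∀ i : ι, (0 : ℝ) < Fintype.card ι * s := fun i =>
    mul_pos (Nat.cast_pos.2 (Fintype.card_pos_iff.2 ⟨i⟩)) hs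
  have hx : ∀ i, |⟪w, x i⟫| ≤ W / (Fintype.card ι * s) := fun i => by
    rw [le_div_iff₀ (hm i)]
    calc |⟪w, x i⟫| * (Fintype.card ι * s) ≤ |⟪w, x i⟫| * t i :=
          mul_le_mul_of_nonneg_left (ht i) (abs_nonneg _)
      _ = |⟪w, vv i⟫ - ⟪w, v⟫| := by
          rw [← inner_sub_right, hvx, real_inner_smul_right, abs_mul,
            abs_of_pos ((hm i).trans_le (ht i)), mul_comm]
      _ ≤ W := abs_sub_le_iff.2 ⟨by linarith [hvv i], by linarith [hvvW i]⟩
  have hW : 0 ≤ W / s := div_nonneg (by linarith) hs.le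
  have hcardW : (Fintype.card ι : ℝ) * (W / (Fintype.card ι * s)) ≤ W / s :=
    calc (Fintype.card ι : ℝ) * (W / (Fintype.card ι * s))
        = W / s * (Fintype.card ι / Fintype.card ι) := by ring
      _ ≤ W / s := mul_le_of_le_one_right hW (div_self_le_one _)
  have := inner_sum_smul_le_add w x hκξ hx
  rw [inner_add_right] at hy ⊢
  linarith

end Hyperplanes

section Polytopes

variable {d : ℕ}

lemma isFacetOf_inter_setOf_inner_eq (hd : 0 < d) {P : Set (Pt d)} (hPconv : Convex ℝ P)
    (hPclosed : IsClosed P) (hdim : polyDim P = d) {w : Pt d} {c : ℝ} (hw : w ≠ 0)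
    (hle : ∀ z ∈ P, ⟪w, z⟫ ≤ c) (hrank : d - 1 ≤ polyDim (P ∩ {z | ⟪w, z⟫ = c})) :
    IsFacetOf P (P ∩ {z | ⟪w, z⟫ = c}) := by
  refine ⟨⟨isExtreme_inter_setOf_inner_eq hle,
    hPconv.inter (convex_hyperplane (innerₛₗ ℝ w).isLinear c),
    hPclosed.inter (isClosed_eq (continuous_const.inner continuous_id) continuous_const)⟩, ?_⟩
  have hF : polyDim (P ∩ {z | ⟪w, z⟫ = c}) = d - 1 := by
    rw [polyDim, vectorSpan_eq_orthogonal_of_subset_setOf_inner_eq hw inter_subset_right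
      (by rwa [finrank_euclideanSpace_fin]), finrank_orthogonal_span_singleton_of_ne_zero hw,
      finrank_euclideanSpace_fin]
  omega

lemma exists_facet_of_notMem_convexHull (hd : 0 < d) {V : Finset (Pt d)} {P : Set (Pt d)}
    (hPV : P = convexHull ℝ (V : Set (Pt d))) (hdim : polyDim P = d) {p : Pt d} (hp : p ∉ P) :
    ∃ w c, ‖w‖ = 1 ∧ (∀ z ∈ P, ⟪w, z⟫ ≤ c) ∧ c < ⟪w, p⟫ ∧
      IsFacetOf P (P ∩ {z | ⟪w, z⟫ = c}) ∧
      (affineSpan ℝ (P ∩ {z | ⟪w, z⟫ = c}) : Set (Pt d)) = {z | ⟪w, z⟫ = c} := by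
  subst hPV
  have hV : Module.finrank ℝ (vectorSpan ℝ (V : Set (Pt d))) = Module.finrank ℝ (Pt d) := by
    rwa [finrank_euclideanSpace_fin, ← direction_affineSpan, ← affineSpan_convexHull,
      direction_affineSpan]
  have hne : V.Nonempty := by
    rw [Finset.nonempty_iff_ne_empty]
    rintro rfl
    rw [Finset.coe_empty, vectorSpan_empty, finrank_bot, finrank_euclideanSpace_fin] at hV
    omega
  obtain ⟨w, c, hw, ⟨hle, ⟨z₀, hz₀, hz₀c⟩, hpc⟩, hrank⟩ :=
    exists_isSeparatingSupport_finrank_ge hne hV hp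
  have hw₀ : w ≠ 0 := by rintro rfl; simp at hw
  have hPle : ∀ z ∈ convexHull ℝ (V : Set (Pt d)), ⟪w, z⟫ ≤ c :=
    fun z hz => convexHull_min hle (convex_halfSpace_le (innerₛₗ ℝ w).isLinear c) hz
  have hrank' := hrank.trans (Submodule.finrank_mono
    (vectorSpan_mono ℝ (inter_subset_inter_left _ (subset_convexHull ℝ (V : Set (Pt d))))))
  refine ⟨w, c, hw, hPle, hpc, isFacetOf_inter_setOf_inner_eq hd (convex_convexHull ℝ _)
    (V.finite_toSet.isCompact_convexHull ℝ).isClosed hdim hw₀ hPle ?_,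
    coe_affineSpan_eq_setOf_inner_eq hw₀ inter_subset_right
      ⟨subset_convexHull ℝ _ hz₀, hz₀c⟩ hrank'⟩
  rwa [finrank_euclideanSpace_fin] at hrank'

lemma sub_inner_le_facetWidth {P F : Set (Pt d)} (hfin : (extremePoints ℝ P).Finite)
    {w : Pt d} (hw : ‖w‖ = 1) {c : ℝ} (hle : ∀ z ∈ P, ⟪w, z⟫ ≤ c)
    (hF : (affineSpan ℝ F : Set (Pt d)) = {z | ⟪w, z⟫ = c}) {z : Pt d}
    (hz : z ∈ extremePoints ℝ P) : c - ⟪w, z⟫ ≤ facetWidth P F := by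
  unfold facetWidth
  rw [hF]
  refine le_trans (le_of_eq ?_) (le_csSup (hfin.image _).bddAbove (mem_image_of_mem _ hz))
  rw [infDist_setOf_inner_eq hw, abs_sub_comm, abs_of_nonneg (sub_nonneg.2 (hle z hz.1))]

lemma le_infDist_of_mem_closure_sdiff_layers {P : Set (Pt d)} {S : Set (Set (Pt d))}
    {ε : Set (Pt d) → ℝ} {y : Pt d} (hy : y ∈ closure (P \ ⋃ F ∈ S, layer P F (ε F)))
    {F : Set (Pt d)} (hF : F ∈ S) : ε F ≤ infDist y (affineSpan ℝ F : Set (Pt d)) :=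
  closure_minimal (fun _ hz => le_of_not_ge fun h => hz.2 (mem_biUnion hF ⟨hz.1, h⟩))
    (isClosed_le continuous_const (continuous_infDist_pt _)) hy

lemma mem_parallelepiped_add_sum_smul_iff {m : ℕ} (v : Pt d) (a : Fin m → ℝ)
    (x : Fin m → Pt d) (p : Pt d) :
    p ∈ Parallelepiped (v + ∑ i, a i • x i) x ↔
      ∃ κ : Fin m → ℝ, (∀ i, κ i - a i ∈ Icc (0 : ℝ) 1) ∧ p = v + ∑ i, κ i • x i := by
  constructor
  · rintro ⟨lam, hlam, rfl⟩
    refine ⟨a + lam, fun i => by simpa using hlam i, ?_⟩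
    simp [add_smul, Finset.sum_add_distrib, add_assoc]
  · rintro ⟨κ, hκ, rfl⟩
    refine ⟨κ - a, hκ, ?_⟩
    simp [sub_smul, Finset.sum_sub_distrib, add_assoc]

lemma add_sum_smul_mem_of_far_from_facets (hd : 0 < d) {V : Finset (Pt d)} {P : Set (Pt d)}
    (hPV : P = convexHull ℝ (V : Set (Pt d))) (hdim : polyDim P = d) {ι : Type*} [Fintype ι]
    {s : ℝ} (hs : 0 < s) {v : Pt d} (hv : v ∈ extremePoints ℝ P) {vv x : ι → Pt d}
    (hvv : ∀ i, vv i ∈ extremePoints ℝ P) {t : ι → ℝ} (ht : ∀ i, Fintype.card ι * s ≤ t i)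
    (hvx : ∀ i, vv i - v = t i • x i) {ξ κ : ι → ℝ}
    (hy : v + ∑ i, ξ i • x i ∈ closure (P \ ⋃ F ∈ {F | IsFacetOf P F ∧ v ∉ F},
      layer P F (facetWidth P F / s)))
    (hκ : ∀ i, 0 ≤ κ i) (hκξ : ∀ i, |κ i - ξ i| ≤ 1) :
    v + ∑ i, κ i • x i ∈ P := by
  by_contra hp
  obtain ⟨w, c, hw, hPc, hpc, hF, hH⟩ := exists_facet_of_notMem_convexHull hd hPV hdim hp
  refine hpc.not_ge ?_
  rcases (hPc v hv.1).eq_or_lt with hvc | hvc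
  · have ht₀ : ∀ i, 0 < t i := fun i =>
      (mul_pos (Nat.cast_pos.2 (Fintype.card_pos_iff.2 ⟨i⟩)) hs).trans_le (ht i)
    exact inner_add_sum_smul_le_of_inner_eq hvc ht₀ hvx (fun i => hPc _ (hvv i).1) hκ
  have hfin : (extremePoints ℝ P).Finite :=
    V.finite_toSet.subset (hPV ▸ extremePoints_convexHull_subset)
  have hyP : v + ∑ i, ξ i • x i ∈ P := closure_minimal sdiff_subset
    (hPV ▸ (V.finite_toSet.isCompact_convexHull ℝ).isClosed) hy
  have hdist := le_infDist_of_mem_closure_sdiff_layers hy ⟨hF, fun h => hvc.ne h.2⟩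
  rw [hH, infDist_setOf_inner_eq hw, abs_sub_comm,
    abs_of_nonneg (sub_nonneg.2 (hPc _ hyP))] at hdist
  have hwidth := fun z (hz : z ∈ extremePoints ℝ P) => sub_inner_le_facetWidth hfin hw hPc hH hz
  exact inner_add_sum_smul_le_of_le_sub hs (hPc v hv.1) (hwidth v hv) (fun i => hPc _ (hvv i).1)
    (fun i => hwidth _ (hvv i)) ht hvx hdist hκξ

end Polytopes

theorem statement10_general (d : ℕ) (hd : 0 < d) (l : ℚ) (hl : 1 ≤ l)
    (P : Set (Pt d)) (hP : IsRationalPolytope P) (hdim : polyDim P = d)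
    (hedges : EdgeLengthsGE P ((l : ℝ) * (d : ℝ) * ((d : ℝ) + 1)))
    (v : Pt d) (hv : v ∈ Set.extremePoints ℝ P)
    (vv : Fin d → Pt d) (hvvvert : ∀ i, vv i ∈ Set.extremePoints ℝ P)
    (hvedge : ∀ i, IsEdge P v (vv i))
    (u : Fin d → Fin d → ℤ) (t : Fin d → ℝ)
    (hprim : ∀ i, IsPrimitive (u i)) (ht : ∀ i, 0 < t i)
    (hu : ∀ i j, (vv i) j - v j = t i * (u i j : ℝ))
    (x : Fin d → Pt d) (hx : ∀ i j, (x i) j = (u i j : ℝ))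
    (C : Set (Pt d))
    (hC : C = {y | ∃ lam : Fin d → ℝ, (∀ i, 0 ≤ lam i) ∧ y = ∑ i, lam i • (vv i - v)})
    (PvC : Set (Pt d))
    (hPvC : PvC = ⋃ a ∈ {a : Fin d → ℕ |
        Parallelepiped (v + ∑ i, (a i : ℝ) • x i) x ⊆ P},
      Parallelepiped (v + ∑ i, (a i : ℝ) • x i) x)
    (Pvε : Set (Pt d))
    (hPvε : Pvε = closure (P \ ⋃ F ∈ {F | IsFacetOf P F ∧ v ∉ F},
      layer P F (facetWidth P F / ((l : ℝ) * ((d : ℝ) + 1))))) :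
    Pvε ∩ ((v + ·) '' C) ⊆ PvC := by
  obtain ⟨V, -, hPV⟩ := hP
  subst hC hPvC hPvε
  rintro _ ⟨hy, _, ⟨lam, hlam, rfl⟩, rfl⟩
  have hvx : ∀ i, vv i - v = t i • x i := fun i => by ext j; simp [hx, hu]
  set ξ := fun i => lam i * t i
  have hξ : ∀ i, 0 ≤ ξ i := fun i => mul_nonneg (hlam i) (ht i).le
  have hy' : v + ∑ i, lam i • (vv i - v) = v + ∑ i, ξ i • x i := by simp_rw [hvx, smul_smul, ξ]
  beta_reduce at hy ⊢
  rw [hy'] at hy ⊢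
  have hfloor : ∀ i, (⌊ξ i⌋₊ : ℝ) ≤ ξ i ∧ ξ i < ⌊ξ i⌋₊ + 1 :=
    fun i => ⟨Nat.floor_le (hξ i), Nat.lt_floor_add_one _⟩
  refine mem_iUnion₂.2 ⟨fun i => ⌊ξ i⌋₊, fun p hp => ?_, (mem_parallelepiped_add_sum_smul_iff
    _ _ _ _).2 ⟨ξ, fun i => ⟨by linarith [hfloor i], by linarith [hfloor i]⟩, rfl⟩⟩
  obtain ⟨κ, hκ, rfl⟩ := (mem_parallelepiped_add_sum_smul_iff _ _ _ _).1 hp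
  have hl₀ : (0 : ℝ) < l := by exact_mod_cast zero_lt_one.trans_le hl
  refine add_sum_smul_mem_of_far_from_facets hd hPV hdim (by positivity) hv hvvvert
    (fun i => ?_) hvx hy (fun i => ?_) (fun i => abs_le.2 ⟨?_, ?_⟩)
  · have := hedges v (vv i) (hvedge i) (u i) (t i) (ht i) (hprim i) (hu i)
    rw [Fintype.card_fin]
    linarith
  all_goals linarith [hfloor i, (hκ i).1, (hκ i).2, Nat.cast_nonneg (α := ℝ) ⌊ξ i⌋₊]

/-- Lemma 4.3. Corner parallelepipedal covers: with `C` the simplicial cone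
spanned by the edge directions `v₁ - v, …, v_d - v` at the vertex `v`, and `xᵢ` the primitive
integer vector in the direction of `vᵢ - v`, one has `P(v, ε̄) ∩ (v + C) ⊆ P(v, C)`. -/
theorem statement10 (d : ℕ) (hd : 0 < d) (l : ℚ) (hl : 1 ≤ l)
    (P : Set (Pt d)) (hP : IsRationalPolytope P) (hdim : polyDim P = d)
    (hedges : EdgeLengthsGE P ((l : ℝ) * (d : ℝ) * ((d : ℝ) + 1)))
    (v : Pt d) (hv : v ∈ Set.extremePoints ℝ P)
    (vv : Fin d → Pt d) (hvvvert : ∀ i, vv i ∈ Set.extremePoints ℝ P)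
    (hvedge : ∀ i, IsEdge P v (vv i))
    (hind : LinearIndependent ℝ (fun i => vv i - v))
    (u : Fin d → Fin d → ℤ) (t : Fin d → ℝ)
    (hprim : ∀ i, IsPrimitive (u i)) (ht : ∀ i, 0 < t i)
    (hu : ∀ i j, (vv i) j - v j = t i * (u i j : ℝ))
    (x : Fin d → Pt d) (hx : ∀ i j, (x i) j = (u i j : ℝ))
    (C : Set (Pt d))
    (hC : C = {y | ∃ lam : Fin d → ℝ, (∀ i, 0 ≤ lam i) ∧ y = ∑ i, lam i • (vv i - v)})
    (PvC : Set (Pt d))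
    (hPvC : PvC = ⋃ a ∈ {a : Fin d → ℕ |
        Parallelepiped (v + ∑ i, (a i : ℝ) • x i) x ⊆ P},
      Parallelepiped (v + ∑ i, (a i : ℝ) • x i) x)
    (Pvε : Set (Pt d))
    (hPvε : Pvε = closure (P \ ⋃ F ∈ {F | IsFacetOf P F ∧ v ∉ F},
      layer P F (facetWidth P F / ((l : ℝ) * ((d : ℝ) + 1))))) :
    Pvε ∩ ((v + ·) '' C) ⊆ PvC :=
  statement10_general d hd l hl P hP hdim hedges v hv vv hvvvert hvedge u t hprim ht hu x hx C hC
    PvC hPvC Pvε hPvε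
end
end

section
/- Let a, b ∈ ℚ with b − a ≥ 1 and let P = [a, b] ⊂ ℝ be a rational segment (a 1-dimensional rational polytope, whose lattice length is b − a). Then for every rational c ≥ 2 one has cP = ⋃ (x + P), where the union is over v ∈ {a, b} and all x ∈ (c−1)P ∩ ((c−1)v + ℤ). In other words, every rational segment of lattice length at least 1 is k-convex-normal for every k ∈ ℚ with k ≥ 2. -/
open Set Metric Pointwise

noncomputable section

/-! Write `y ∈ c • [a, b]` as `y = c a + s`. If `s ≤ (c - 1)(b - a)`, take the vertex `a` and
`x = (c - 1) a + ⌊s⌋`: the remainder `y - x = a + (s - ⌊s⌋)` lies in `[a, b]` because the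
fractional part of `s` is below `1 ≤ b - a`. Otherwise `y > (c - 1) b + a`, and the vertex `b`
with `x = (c - 1) b` works. -/

theorem exists_vertex_translate_of_mem_Icc {a b c y : ℝ} (hab : 1 ≤ b - a) (hc : 1 ≤ c)
    (hy : y ∈ Icc (c * a) (c * b)) :
    ∃ v ∈ ({a, b} : Set ℝ), ∃ x ∈ Icc ((c - 1) * a) ((c - 1) * b),
      (∃ n : ℤ, x - (c - 1) * v = n) ∧ y - x ∈ Icc a b := by
  obtain ⟨hya, hyb⟩ := hy
  by_cases hlow : y - c * a ≤ (c - 1) * (b - a)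
  · set n := ⌊y - c * a⌋
    have hn_le : (n : ℝ) ≤ y - c * a := Int.floor_le _
    have hn_gt : y - c * a < n + 1 := Int.lt_floor_add_one _
    have hn_nonneg : (0 : ℝ) ≤ n := by exact_mod_cast Int.floor_nonneg.2 (by linarith)
    exact ⟨a, by simp, (c - 1) * a + n, ⟨by linarith, by linarith⟩, ⟨n, by ring⟩,
      by constructor <;> linarith⟩
  · have hba : (c - 1) * a ≤ (c - 1) * b := by nlinarith
    exact ⟨b, by simp, (c - 1) * b, ⟨hba, le_rfl⟩, ⟨0, by simp⟩, by constructor <;> linarith⟩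

theorem smul_Icc_eq_vertex_translates {a b c : ℝ} (hab : 1 ≤ b - a) (hc : 1 < c) :
    c • Icc a b =
      {y | ∃ v ∈ ({a, b} : Set ℝ), ∃ x ∈ (c - 1) • Icc a b,
        (∃ n : ℤ, x - (c - 1) * v = n) ∧ ∃ p ∈ Icc a b, y = x + p} := by
  rw [LinearOrderedField.smul_Icc (by linarith), LinearOrderedField.smul_Icc (by linarith)]
  ext y
  constructor
  · intro hy
    obtain ⟨v, hv, x, hx, hn, hp⟩ := exists_vertex_translate_of_mem_Icc hab hc.le hy
    exact ⟨v, hv, x, hx, hn, y - x, hp, by ring⟩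
  · rintro ⟨v, -, x, ⟨hx₁, hx₂⟩, -, p, ⟨hp₁, hp₂⟩, rfl⟩
    constructor <;> linarith

/-- Lemma 5.1(a), `d = 1`. Every rational segment `[a, b] ⊂ ℝ` of lattice
length `b - a ≥ 1` is `k`-convex-normal for every `k ≥ 2`. -/
theorem statement12 (a b : ℚ) (hab : 1 ≤ b - a) (c : ℚ) (hc : 2 ≤ c) :
    (c : ℝ) • Set.Icc (a : ℝ) (b : ℝ) =
      {y | ∃ v ∈ ({(a : ℝ), (b : ℝ)} : Set ℝ),
        ∃ x ∈ ((c : ℝ) - 1) • Set.Icc (a : ℝ) (b : ℝ),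
          (∃ n : ℤ, x - ((c : ℝ) - 1) * v = (n : ℝ)) ∧
          ∃ p ∈ Set.Icc (a : ℝ) (b : ℝ), y = x + p} := by
  have hc' : (2 : ℝ) ≤ c := by exact_mod_cast hc
  exact smul_Icc_eq_vertex_translates (by exact_mod_cast hab) (by linarith)
end
end
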